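/- arXiv:math/9810182 — 7 statements merged into one kernel-verified Lean document; each statement's English description precedes it below -/
import Mathlib

section
/- Let q be an odd prime and let χ = χ_q be the Legendre symbol modulo q. Let r, m, m₁, m₂ be integers with q | r. Then H_r(m, m₁, m₂; q) = χ(m m₁ m₂)² · τ(χ)², where τ(χ) = Σ_{x mod q} χ(x) e_q(x) is the Gauss sum. (Note χ(m m₁ m₂)² equals 1 if q ∤ m m₁ m₂ and 0 otherwise.) -/
/-- `e_c(x) = exp(2πix/c)`. -/
noncomputable def ec (c : ℕ) (x : ℤ) : ℂ :=
  Complex.exp (2 * Real.pi * Complex.I * x / c)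

/-- The Kloosterman sum `S(m, n; c) = Σ_{a d ≡ 1 (mod c)} e_c(a m + d n)`. -/
noncomputable def kloos (m n : ℤ) (c : ℕ) : ℂ :=
  ∑ a ∈ Finset.range c, ∑ d ∈ Finset.range c,
    if (a * d) % c = 1 % c then ec c (a * m + d * n) else 0

/-- `G(m, m₁, m₂; c)` : complete sum of Kloosterman sums twisted by `χ_q`, for `q ∣ c`. -/
noncomputable def Gsum (q : ℕ) (m m1 m2 : ℤ) (c : ℕ) : ℂ :=
  ∑ a ∈ Finset.range c, ∑ a1 ∈ Finset.range c, ∑ a2 ∈ Finset.range c,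
    (jacobiSym ((a : ℤ) * a1 * a2) q : ℂ) * kloos a ((a1 : ℤ) * a2) c *
      ec c (a * m + a1 * m1 + a2 * m2)

/-- `G'(m, m₁, m₂; c) = e_c(−m m₁ m₂) G(m, m₁, m₂; c)`. -/
noncomputable def Gsum' (q : ℕ) (m m1 m2 : ℤ) (c : ℕ) : ℂ :=
  ec c (-(m * m1 * m2)) * Gsum q m m1 m2 c

/-- `H_r(m, m₁, m₂; q) = Σ_{u,v mod q} χ_q(v (u + v m₁)(v r − m)(u r + m m₁)) e_q(u m₂)`. -/
noncomputable def Hr (r m m1 m2 : ℤ) (q : ℕ) : ℂ :=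
  ∑ u ∈ Finset.range q, ∑ v ∈ Finset.range q,
    (jacobiSym ((v : ℤ) * ((u : ℤ) + v * m1) * ((v : ℤ) * r - m) * ((u : ℤ) * r + m * m1)) q : ℂ) *
      ec q (u * m2)

/-- `H(w; q) = Σ_{u,v mod q} χ_q(u v (u+1)(v+1)) e_q((u v − 1) w)`. -/
noncomputable def Hw (w : ℤ) (q : ℕ) : ℂ :=
  ∑ u ∈ Finset.range q, ∑ v ∈ Finset.range q,
    (jacobiSym ((u : ℤ) * v * ((u : ℤ) + 1) * ((v : ℤ) + 1)) q : ℂ) *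
      ec q (((u : ℤ) * v - 1) * w)

/-- Reduced sum `H*(w; q)`, restricted by `gcd(uv − 1, q) = 1`. -/
noncomputable def Hstar (w : ℤ) (q : ℕ) : ℂ :=
  ∑ u ∈ Finset.range q, ∑ v ∈ Finset.range q,
    if Int.gcd ((u : ℤ) * v - 1) q = 1 then
      (jacobiSym ((u : ℤ) * v * ((u : ℤ) + 1) * ((v : ℤ) + 1)) q : ℂ) *
        ec q (((u : ℤ) * v - 1) * w)
    else 0

/-- The Ramanujan sum `R(n; k) = Σ_{d mod k, (d,k)=1} e_k(d n)`. -/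
noncomputable def Ram (n : ℤ) (k : ℕ) : ℂ :=
  ∑ d ∈ Finset.range k, if Nat.gcd d k = 1 then ec k (d * n) else 0

/-- The Gauss sum `τ(χ_q) = Σ_{x mod q} χ_q(x) e_q(x)`. -/
noncomputable def gaussτ (q : ℕ) : ℂ :=
  ∑ x ∈ Finset.range q, (jacobiSym (x : ℤ) q : ℂ) * ec q (x : ℤ)


section Aux

/-- Sum over `Finset.range q` equals sum over `ZMod q`. -/
private lemma sum_range_zmod (q : ℕ) [NeZero q] (f : ZMod q → ℂ) :
    ∑ x ∈ Finset.range q, f (x : ZMod q) = ∑ x : ZMod q, f x := by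
  refine Finset.sum_bij' (fun x _ => ((x : ℕ) : ZMod q)) (fun y _ => y.val)
    (fun a _ => Finset.mem_univ _) (fun a _ => Finset.mem_range.2 (ZMod.val_lt a))
    (fun a ha => ZMod.val_cast_of_lt (Finset.mem_range.1 ha))
    (fun a _ => ZMod.natCast_rightInverse a) (fun a _ => rfl)

/-- The quadratic character of `ZMod q`, with values in `ℂ`. -/
private noncomputable def χC (q : ℕ) [Fact q.Prime] : MulChar (ZMod q) ℂ :=
  (quadraticChar (ZMod q)).ringHomComp (Int.castRingHom ℂ)

private lemma χC_apply (q : ℕ) [Fact q.Prime] (x : ZMod q) :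
    χC q x = ((quadraticChar (ZMod q) x : ℤ) : ℂ) := rfl

private lemma jacobi_eq (q : ℕ) [Fact q.Prime] (a : ℤ) :
    (jacobiSym a q : ℂ) = χC q ((a : ZMod q)) := by
  rw [← jacobiSym.legendreSym.to_jacobiSym]; rfl

private lemma ec_eq (q : ℕ) [NeZero q] (a : ℤ) :
    ec q a = ZMod.stdAddChar ((a : ZMod q)) := by
  rw [ZMod.stdAddChar_coe]; rfl

private lemma χC_sq (q : ℕ) [Fact q.Prime] {a : ZMod q} (ha : a ≠ 0) :
    χC q a * χC q a = 1 := by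
  rw [χC_apply, ← Int.cast_mul, ← sq, quadraticChar_sq_one ha, Int.cast_one]

private lemma χC_sum_zero (q : ℕ) [Fact q.Prime] (hq2 : q ≠ 2) :
    ∑ x : ZMod q, χC q x = 0 := by
  have h := quadraticChar_sum_zero (F := ZMod q)
    (by rw [ZMod.ringChar_zmod_n]; exact_mod_cast hq2)
  calc ∑ x : ZMod q, χC q x
      = ((∑ x : ZMod q, quadraticChar (ZMod q) x : ℤ) : ℂ) := by
        rw [Int.cast_sum]; rfl
    _ = 0 := by rw [h]; simp

/-- Twisted Gauss sum. -/
private lemma twist (q : ℕ) [Fact q.Prime] [NeZero q] (hq2 : q ≠ 2) (b : ZMod q) :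
    ∑ x : ZMod q, χC q x * ZMod.stdAddChar (x * b)
      = χC q b * gaussSum (χC q) ZMod.stdAddChar := by
  rcases eq_or_ne b 0 with rfl | hb
  · have h0 : χC q (0 : ZMod q) = 0 := by
      rw [χC_apply, quadraticChar_zero]; simp
    simp only [mul_zero, AddChar.map_zero_eq_one, mul_one, h0, zero_mul]
    exact χC_sum_zero q hq2
  · have h1 := gaussSum_mulShift (χC q) (ZMod.stdAddChar (N := q)) (Units.mk0 b hb)
    have h2 : gaussSum (χC q) (AddChar.mulShift ZMod.stdAddChar ((Units.mk0 b hb : (ZMod q)ˣ) : ZMod q))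
        = ∑ x : ZMod q, χC q x * ZMod.stdAddChar (x * b) := by
      simp only [gaussSum, AddChar.mulShift_apply, Units.val_mk0]
      exact Finset.sum_congr rfl fun x _ => by rw [mul_comm b x]
    rw [h2] at h1
    calc ∑ x : ZMod q, χC q x * ZMod.stdAddChar (x * b)
        = (χC q b * χC q b) * ∑ x : ZMod q, χC q x * ZMod.stdAddChar (x * b) := by
          rw [χC_sq q hb, one_mul]
      _ = χC q b * (χC q ((Units.mk0 b hb : (ZMod q)ˣ) : ZMod q)
            * ∑ x : ZMod q, χC q x * ZMod.stdAddChar (x * b)) := by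
          rw [Units.val_mk0]; ring
      _ = χC q b * gaussSum (χC q) ZMod.stdAddChar := by rw [h1]

private lemma gaussτ_eq (q : ℕ) [Fact q.Prime] [NeZero q] :
    gaussτ q = gaussSum (χC q) ZMod.stdAddChar := by
  rw [gaussτ, gaussSum,
    ← sum_range_zmod q (fun z => χC q z * ZMod.stdAddChar z)]
  refine Finset.sum_congr rfl fun x _ => ?_
  rw [jacobi_eq, ec_eq]
  norm_cast

end Aux

/-- Lemma 10.1, first case: for `q` an odd prime and `q ∣ r`,
`H_r(m, m₁, m₂; q) = χ(m m₁ m₂)² τ(χ)²`. -/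
theorem Hr_eval_of_dvd_r (q : ℕ) (hq : q.Prime) (hodd : Odd q) (r m m1 m2 : ℤ)
    (hr : (q : ℤ) ∣ r) :
    Hr r m m1 m2 q = (jacobiSym (m * m1 * m2) q : ℂ) ^ 2 * gaussτ q ^ 2 := by
  haveI : Fact q.Prime := ⟨hq⟩
  haveI : NeZero q := ⟨hq.pos.ne'⟩
  have hq2 : q ≠ 2 := by rintro rfl; exact (Nat.not_odd_iff_even.mpr (by norm_num)) hodd
  have hr0 : ((r : ZMod q)) = 0 := (ZMod.intCast_zmod_eq_zero_iff_dvd r q).2 hr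
  have hm1 : ((-1 : ZMod q)) ≠ 0 := neg_ne_zero.mpr one_ne_zero
  -- Step 1: rewrite as a sum over `ZMod q`
  have step1 : Hr r m m1 m2 q
      = ∑ u : ZMod q, ∑ v : ZMod q,
          χC q (v * (u + v * (m1 : ZMod q)) * (-(m : ZMod q)) * ((m : ZMod q) * (m1 : ZMod q)))
            * ZMod.stdAddChar (u * (m2 : ZMod q)) := by
    rw [Hr, ← sum_range_zmod q (fun u => ∑ v : ZMod q,
      χC q (v * (u + v * (m1 : ZMod q)) * (-(m : ZMod q)) * ((m : ZMod q) * (m1 : ZMod q)))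
        * ZMod.stdAddChar (u * (m2 : ZMod q)))]
    refine Finset.sum_congr rfl fun u _ => ?_
    rw [← sum_range_zmod q (fun v =>
      χC q (v * (((u : ℕ) : ZMod q) + v * (m1 : ZMod q)) * (-(m : ZMod q))
          * ((m : ZMod q) * (m1 : ZMod q)))
        * ZMod.stdAddChar (((u : ℕ) : ZMod q) * (m2 : ZMod q)))]
    refine Finset.sum_congr rfl fun v _ => ?_
    rw [jacobi_eq, ec_eq]
    congr 1
    · congr 1
      push_cast [hr0]
      ring
    · congr 1
      push_cast
      ring
  -- inner sum over u
  have hinner : ∀ c : ZMod q,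
      ∑ u : ZMod q, χC q (u + c) * ZMod.stdAddChar (u * (m2 : ZMod q))
      = ZMod.stdAddChar (-(c * (m2 : ZMod q)))
          * (χC q ((m2 : ZMod q)) * gaussSum (χC q) ZMod.stdAddChar) := by
    intro c
    have he : ∑ u : ZMod q, χC q (u + c) * ZMod.stdAddChar (u * (m2 : ZMod q))
        = ∑ w : ZMod q, χC q w * ZMod.stdAddChar ((w - c) * (m2 : ZMod q)) :=
      Fintype.sum_equiv (Equiv.addRight c) _ _ (fun u => by simp)
    have hw : ∀ w : ZMod q, χC q w * ZMod.stdAddChar ((w - c) * (m2 : ZMod q))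
        = ZMod.stdAddChar (-(c * (m2 : ZMod q)))
            * (χC q w * ZMod.stdAddChar (w * (m2 : ZMod q))) := by
      intro w
      have h : (w - c) * (m2 : ZMod q)
          = w * (m2 : ZMod q) + (-(c * (m2 : ZMod q))) := by ring
      rw [h, AddChar.map_add_eq_mul]
      ring
    rw [he, Finset.sum_congr rfl (fun w _ => hw w), ← Finset.mul_sum,
      twist q hq2 ((m2 : ZMod q))]
  -- Step 2: evaluate the double sum
  have step2 : Hr r m m1 m2 q
      = (χC q (-1) * χC q (-1)) * (χC q ((m : ZMod q)) * χC q ((m : ZMod q)))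
          * (χC q ((m1 : ZMod q)) * χC q ((m1 : ZMod q)))
          * (χC q ((m2 : ZMod q)) * χC q ((m2 : ZMod q)))
          * (gaussSum (χC q) ZMod.stdAddChar * gaussSum (χC q) ZMod.stdAddChar) := by
    rw [step1, Finset.sum_comm]
    have hterm : ∀ v u : ZMod q,
        χC q (v * (u + v * (m1 : ZMod q)) * (-(m : ZMod q)) * ((m : ZMod q) * (m1 : ZMod q)))
            * ZMod.stdAddChar (u * (m2 : ZMod q))
        = (χC q (-1) * χC q ((m : ZMod q)) * (χC q ((m : ZMod q)) * χC q ((m1 : ZMod q)))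
            * χC q v)
          * (χC q (u + v * (m1 : ZMod q)) * ZMod.stdAddChar (u * (m2 : ZMod q))) := by
      intro v u
      have h : (-(m : ZMod q)) = (-1) * (m : ZMod q) := by ring
      rw [h]
      simp only [map_mul]
      ring
    calc ∑ v : ZMod q, ∑ u : ZMod q,
          χC q (v * (u + v * (m1 : ZMod q)) * (-(m : ZMod q)) * ((m : ZMod q) * (m1 : ZMod q)))
            * ZMod.stdAddChar (u * (m2 : ZMod q))
        = ∑ v : ZMod q,
            (χC q (-1) * χC q ((m : ZMod q)) * (χC q ((m : ZMod q)) * χC q ((m1 : ZMod q)))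
              * χC q v)
            * ∑ u : ZMod q, χC q (u + v * (m1 : ZMod q))
                * ZMod.stdAddChar (u * (m2 : ZMod q)) := by
          refine Finset.sum_congr rfl fun v _ => ?_
          rw [Finset.mul_sum]
          exact Finset.sum_congr rfl fun u _ => hterm v u
      _ = ∑ v : ZMod q,
            ((χC q (-1) * χC q ((m : ZMod q)) * (χC q ((m : ZMod q)) * χC q ((m1 : ZMod q))))
              * (χC q ((m2 : ZMod q)) * gaussSum (χC q) ZMod.stdAddChar))
            * (χC q v * ZMod.stdAddChar (v * (-((m1 : ZMod q) * (m2 : ZMod q))))) := by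
          refine Finset.sum_congr rfl fun v _ => ?_
          rw [hinner (v * (m1 : ZMod q))]
          have h : -(v * (m1 : ZMod q) * (m2 : ZMod q))
              = v * (-((m1 : ZMod q) * (m2 : ZMod q))) := by ring
          rw [h]
          ring
      _ = ((χC q (-1) * χC q ((m : ZMod q)) * (χC q ((m : ZMod q)) * χC q ((m1 : ZMod q))))
              * (χC q ((m2 : ZMod q)) * gaussSum (χC q) ZMod.stdAddChar))
            * (χC q (-((m1 : ZMod q) * (m2 : ZMod q))) * gaussSum (χC q) ZMod.stdAddChar) := by
          rw [← Finset.mul_sum, twist q hq2 (-((m1 : ZMod q) * (m2 : ZMod q)))]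
      _ = _ := by
          have h : (-((m1 : ZMod q) * (m2 : ZMod q)))
              = (-1) * (m1 : ZMod q) * (m2 : ZMod q) := by ring
          rw [h]
          simp only [map_mul]
          ring
  -- conclude
  have hRHS : (jacobiSym (m * m1 * m2) q : ℂ)
      = χC q ((m : ZMod q)) * χC q ((m1 : ZMod q)) * χC q ((m2 : ZMod q)) := by
    rw [jacobi_eq]
    have h : ((m * m1 * m2 : ℤ) : ZMod q) = (m : ZMod q) * (m1 : ZMod q) * (m2 : ZMod q) := by
      push_cast; ring
    rw [h]
    simp only [map_mul]
  rw [step2, χC_sq q hm1, one_mul, hRHS, gaussτ_eq]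
  ring
end

section
/- Let q be an odd prime and let χ = χ_q be the Legendre symbol modulo q. Let r, m, m₁, m₂ be integers with q ∤ r and q | m m₁ m₂. Then H_r(m, m₁, m₂; q) = R(m; q) R(m₁; q) R(m₂; q) / (q − 1), where R(n; q) = Σ_{d mod q, gcd(d, q) = 1} e_q(d n) is the Ramanujan sum. -/
/-!
Work over any finite field `F` of odd characteristic, with a primitive additive character `ψ` and
the quadratic character `χ`. Both `∑_{u ≠ 0} ψ(u c)` and `∑ₓ χ(x (x + c))` equal
`ρ(c) = |F| - 1` for `c = 0` and `-1` otherwise.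

If `m = 0` (resp. `m₁ = 0`), pulling squares out of the quartic shows that the inner sum over `v`
is `ρ(m₁)` (resp. `ρ(m)`) for every `u ≠ 0` and vanishes at `u = 0`, so the sum over `u` produces
the factor `ρ(m₂)`. If `m₂ = 0`, the additive character disappears; summing over `u` first gives
`χ(r) χ(v (r v - m)) ρ(m₁ (m - v r))`, whose last factor equals `ρ(m₁)` wherever the middle one
is nonzero, and the remaining sum over `v` is `χ(r) ρ(m)`.
-/

open Finset

variable {F : Type*} [Field F] [Fintype F] [DecidableEq F]

/-- The common value of `∑_{u ≠ 0} ψ (u * c)` for primitive `ψ` and of `∑ x, χ (x * (x + c))`;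
`Ram` is its instance for `F = ZMod q`. -/
def ramanujanSum (c : F) : ℤ := if c = 0 then Fintype.card F - 1 else -1

lemma ramanujanSum_mul_of_ne_zero (c : F) {d : F} (hd : d ≠ 0) :
    ramanujanSum (c * d) = ramanujanSum c := by
  simp [ramanujanSum, hd]

lemma ramanujanSum_neg (c : F) : ramanujanSum (-c) = ramanujanSum c := by
  simp [ramanujanSum]

lemma sum_erase_zero_addChar_mul {ψ : AddChar F ℂ} (hψ : ψ.IsPrimitive) (b : F) :
    ∑ u ∈ univ.erase 0, ψ (u * b) = ramanujanSum b := by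
  rw [sum_erase_eq_sub (mem_univ 0), AddChar.sum_mulShift b hψ, ramanujanSum]
  split_ifs <;> simp

lemma sum_mul_addChar_mul_of_eq_on_ne_zero {ψ : AddChar F ℂ} (hψ : ψ.IsPrimitive) {T : F → ℂ}
    {K : ℂ} (h0 : T 0 = 0) (hT : ∀ u ≠ 0, T u = K) (b : F) :
    ∑ u, T u * ψ (u * b) = K * ramanujanSum b := by
  rw [← sum_erase_zero_addChar_mul hψ, mul_sum, ← sum_erase univ (by rw [h0, zero_mul])]
  exact sum_congr rfl fun u hu => by rw [hT u (ne_of_mem_erase hu)]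

local notation "χ" => quadraticChar F

lemma quadraticChar_sum_sq_mul (f : F → F) :
    ∑ x, χ (x ^ 2 * f x) = ∑ x, χ (f x) - χ (f 0) := by
  rw [← sum_erase_eq_sub (mem_univ 0),
    ← sum_erase (f := fun x => χ (x ^ 2 * f x)) univ (a := 0) (by simp)]
  exact sum_congr rfl fun x hx => by
    rw [map_mul, quadraticChar_sq_one' (ne_of_mem_erase hx), one_mul]

lemma quadraticChar_sum_add_mul (hF : ringChar F ≠ 2) (a b : F) :
    ∑ x, χ (a + b * x) = if b = 0 then Fintype.card F * χ a else 0 := by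
  split_ifs with hb
  · simp [hb]
  · rw [← quadraticChar_sum_zero hF]
    exact Fintype.sum_bijective _ ((AddGroup.addLeft_bijective a).comp (mulLeft_bijective₀ b hb))
      _ _ fun _ => rfl

lemma quadraticChar_sum_mul_add_self (hF : ringChar F ≠ 2) (b : F) :
    ∑ x, χ (x * (x + b)) = ramanujanSum b := by
  rcases eq_or_ne b 0 with rfl | hb
  · simpa [← sq, ramanujanSum] using quadraticChar_sum_sq_mul (F := F) fun _ => 1
  have hJ : jacobiSum χ χ = -χ (-1) := by
    simpa [(quadraticChar_isQuadratic F).inv] using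
      jacobiSum_nontrivial_inv (quadraticChar_ne_one hF)
  calc ∑ x, χ (x * (x + b)) = ∑ y, χ (-b * y * (-b * y + b)) :=
        (Fintype.sum_bijective _ (mulLeft_bijective₀ _ (neg_ne_zero.2 hb)) _ _ fun _ => rfl).symm
    _ = ∑ y, χ (-1) * (χ y * χ (1 - y)) := by
        refine sum_congr rfl fun y _ => ?_
        rw [show -b * y * (-b * y + b) = b ^ 2 * (-1 * (y * (1 - y))) by ring, map_mul,
          quadraticChar_sq_one' hb, one_mul, map_mul, map_mul]
    _ = χ (-1) * jacobiSum χ χ := by rw [← mul_sum]; rfl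
    _ = ramanujanSum b := by
        rw [hJ, mul_neg, ← sq, quadraticChar_sq_one (neg_ne_zero.2 one_ne_zero), ramanujanSum,
          if_neg hb]

lemma quadraticChar_sum_mul_mul_add (hF : ringChar F ≠ 2) {a : F} (ha : a ≠ 0) (b : F) :
    ∑ x, χ (x * (a * x + b)) = χ a * ramanujanSum b := by
  have hinv : χ a⁻¹ = χ a := by
    rw [← MulChar.inv_apply', (quadraticChar_isQuadratic F).inv]
  calc ∑ x, χ (x * (a * x + b)) = ∑ y, χ (a⁻¹ * y * (a * (a⁻¹ * y) + b)) :=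
        (Fintype.sum_bijective _ (mulLeft_bijective₀ _ (inv_ne_zero ha)) _ _ fun _ => rfl).symm
    _ = ∑ y, χ a * χ (y * (y + b)) := by
        refine sum_congr rfl fun y _ => ?_
        rw [← hinv, ← map_mul, mul_assoc, mul_inv_cancel_left₀ ha]
    _ = χ a * ramanujanSum b := by rw [← mul_sum, quadraticChar_sum_mul_add_self hF]

def hrPoly (r m m₁ u v : F) : F := v * (u + v * m₁) * (v * r - m) * (u * r + m * m₁)

noncomputable def hrSum (ψ : AddChar F ℂ) (r m m₁ m₂ : F) : ℂ :=
  ∑ u, ∑ v, (χ (hrPoly r m m₁ u v) : ℂ) * ψ (u * m₂)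

lemma quadraticChar_sum_hrPoly_of_m_zero (hF : ringChar F ≠ 2) {r : F} (hr : r ≠ 0) (m₁ u : F) :
    ∑ v, χ (hrPoly r 0 m₁ u v) = if u = 0 then 0 else ramanujanSum m₁ := by
  have hpoly : ∀ v, hrPoly r 0 m₁ u v = v ^ 2 * ((r * u) ^ 2 + r ^ 2 * u * m₁ * v) := fun v => by
    unfold hrPoly; ring
  simp_rw [hpoly]
  rw [quadraticChar_sum_sq_mul, quadraticChar_sum_add_mul hF]
  rcases eq_or_ne u 0 with rfl | hu
  · simp
  · simp [quadraticChar_sq_one' (mul_ne_zero hr hu), hr, hu, ramanujanSum]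
    split_ifs <;> ring

lemma quadraticChar_sum_hrPoly_of_m₁_zero (hF : ringChar F ≠ 2) {r : F} (hr : r ≠ 0) (m u : F) :
    ∑ v, χ (hrPoly r m 0 u v) = if u = 0 then 0 else ramanujanSum m := by
  rcases eq_or_ne u 0 with rfl | hu
  · simp [hrPoly]
  have hpoly : ∀ v, χ (hrPoly r m 0 u v) = χ r * χ (v * (r * v + -m)) := fun v => by
    rw [show hrPoly r m 0 u v = u ^ 2 * (r * (v * (r * v + -m))) by unfold hrPoly; ring, map_mul,
      quadraticChar_sq_one' hu, one_mul, map_mul]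
  rw [sum_congr rfl fun v _ => hpoly v, ← mul_sum, quadraticChar_sum_mul_mul_add hF hr,
    ← mul_assoc, ← sq, quadraticChar_sq_one hr, one_mul, ramanujanSum_neg, if_neg hu]

lemma quadraticChar_sum_sum_hrPoly (hF : ringChar F ≠ 2) {r : F} (hr : r ≠ 0) (m m₁ : F) :
    ∑ u, ∑ v, χ (hrPoly r m m₁ u v) = ramanujanSum m * ramanujanSum m₁ := by
  have inner : ∀ v, ∑ u, χ (hrPoly r m m₁ u v)
      = χ (v * (r * v + -m)) * (χ r * ramanujanSum (m₁ * (m - v * r))) := fun v => by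
    rw [← quadraticChar_sum_mul_mul_add hF hr, mul_sum]
    refine Fintype.sum_bijective _ (AddGroup.addRight_bijective (v * m₁)) _ _ fun u => ?_
    rw [← map_mul]; congr 1; unfold hrPoly; ring
  have outer : ∀ v, χ (v * (r * v + -m)) * ramanujanSum (m₁ * (m - v * r))
      = χ (v * (r * v + -m)) * ramanujanSum m₁ := fun v => by
    rcases eq_or_ne (m - v * r) 0 with h | h
    · rw [show r * v + -m = -(m - v * r) by ring, h]; simp
    · rw [ramanujanSum_mul_of_ne_zero _ h]
  rw [sum_comm]
  simp_rw [inner, mul_left_comm _ (χ r), outer, ← mul_sum, ← sum_mul,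
    quadraticChar_sum_mul_mul_add hF hr, ← mul_assoc, ← sq, quadraticChar_sq_one hr, one_mul,
    ramanujanSum_neg]

section hrSum

variable {ψ : AddChar F ℂ} {r : F}

lemma hrSum_of_m_zero (hψ : ψ.IsPrimitive) (hF : ringChar F ≠ 2) (hr : r ≠ 0) (m₁ m₂ : F) :
    hrSum ψ r 0 m₁ m₂ = ramanujanSum m₁ * ramanujanSum m₂ := by
  simp_rw [hrSum, ← sum_mul]
  refine sum_mul_addChar_mul_of_eq_on_ne_zero hψ (by simp [hrPoly]) (fun u hu => ?_) m₂
  exact_mod_cast (quadraticChar_sum_hrPoly_of_m_zero hF hr m₁ u).trans (if_neg hu)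

lemma hrSum_of_m₁_zero (hψ : ψ.IsPrimitive) (hF : ringChar F ≠ 2) (hr : r ≠ 0) (m m₂ : F) :
    hrSum ψ r m 0 m₂ = ramanujanSum m * ramanujanSum m₂ := by
  simp_rw [hrSum, ← sum_mul]
  refine sum_mul_addChar_mul_of_eq_on_ne_zero hψ (by simp [hrPoly]) (fun u hu => ?_) m₂
  exact_mod_cast (quadraticChar_sum_hrPoly_of_m₁_zero hF hr m u).trans (if_neg hu)

lemma hrSum_of_m₂_zero (hF : ringChar F ≠ 2) (hr : r ≠ 0) (m m₁ : F) :
    hrSum ψ r m m₁ 0 = ramanujanSum m * ramanujanSum m₁ := by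
  simp only [hrSum, mul_zero, AddChar.map_zero_eq_one, mul_one]
  exact_mod_cast quadraticChar_sum_sum_hrPoly hF hr m m₁

lemma hrSum_of_mul_eq_zero (hψ : ψ.IsPrimitive) (hF : ringChar F ≠ 2) (hr : r ≠ 0)
    {m m₁ m₂ : F} (h : m * m₁ * m₂ = 0) :
    hrSum ψ r m m₁ m₂ = ramanujanSum m * ramanujanSum m₁ * ramanujanSum m₂ /
      (Fintype.card F - 1 : ℂ) := by
  have hcard : (Fintype.card F - 1 : ℂ) ≠ 0 := by
    rw [sub_ne_zero]; exact_mod_cast Fintype.one_lt_card.ne'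
  have hzero : (ramanujanSum (0 : F) : ℂ) = Fintype.card F - 1 := by simp [ramanujanSum]
  rcases mul_eq_zero.1 h with h | rfl
  · rcases mul_eq_zero.1 h with rfl | rfl
    · rw [hrSum_of_m_zero hψ hF hr, hzero]; field_simp
    · rw [hrSum_of_m₁_zero hψ hF hr, hzero]; field_simp
  · rw [hrSum_of_m₂_zero hF hr, hzero]; field_simp

end hrSum

lemma sum_range_eq_sum_zmod {M : Type*} [AddCommMonoid M] (n : ℕ) [NeZero n] (f : ZMod n → M) :
    ∑ a ∈ range n, f a = ∑ x, f x :=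
  sum_nbij' Nat.cast ZMod.val (by simp) (by simp [ZMod.val_lt])
    (fun a ha => ZMod.val_cast_of_lt (mem_range.1 ha)) (fun x _ => ZMod.natCast_zmod_val x)
    (fun _ _ => rfl)

lemma ec_eq_stdAddChar (q : ℕ) [NeZero q] (x : ℤ) : ec q x = ZMod.stdAddChar (x : ZMod q) :=
  (ZMod.stdAddChar_coe x).symm

lemma jacobiSym_eq_quadraticChar (q : ℕ) [Fact q.Prime] (x : ℤ) :
    jacobiSym x q = quadraticChar (ZMod q) x := by
  rw [← jacobiSym.legendreSym.to_jacobiSym]; rfl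

lemma Hr_eq_hrSum (q : ℕ) [Fact q.Prime] (r m m₁ m₂ : ℤ) :
    Hr r m m₁ m₂ q = hrSum ZMod.stdAddChar (r : ZMod q) m m₁ m₂ := by
  rw [Hr, hrSum, ← sum_range_eq_sum_zmod q]
  refine sum_congr rfl fun u _ => ?_
  rw [← sum_range_eq_sum_zmod q]
  refine sum_congr rfl fun v _ => ?_
  rw [jacobiSym_eq_quadraticChar, ec_eq_stdAddChar, hrPoly]
  push_cast; rfl

lemma Ram_eq_ramanujanSum (q : ℕ) [hq : Fact q.Prime] (n : ℤ) :
    Ram n q = ramanujanSum (n : ZMod q) := by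
  rw [← sum_erase_zero_addChar_mul (ZMod.isPrimitive_stdAddChar q), ← filter_ne', sum_filter,
    Ram, ← sum_range_eq_sum_zmod]
  refine sum_congr rfl fun d _ => ?_
  have hcop : Nat.gcd d q = 1 ↔ (d : ZMod q) ≠ 0 := by
    rw [Ne, ZMod.natCast_eq_zero_iff, ← hq.out.coprime_iff_not_dvd, Nat.coprime_comm]
  simp only [hcop, ec_eq_stdAddChar]
  push_cast; rfl

/-- Lemma 10.1, second case: for `q` an odd prime, `q ∤ r` and `q ∣ m m₁ m₂`,
`H_r(m, m₁, m₂; q) = R(m; q) R(m₁; q) R(m₂; q) / (q − 1)`. -/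
theorem Hr_eval_of_dvd_mmm (q : ℕ) (hq : q.Prime) (hodd : Odd q) (r m m1 m2 : ℤ)
    (hr : ¬ (q : ℤ) ∣ r) (hm : (q : ℤ) ∣ m * m1 * m2) :
    Hr r m m1 m2 q = Ram m q * Ram m1 q * Ram m2 q / ((q : ℂ) - 1) := by
  have : Fact q.Prime := ⟨hq⟩
  have hF : ringChar (ZMod q) ≠ 2 := by
    rw [ZMod.ringChar_zmod_n]; rintro rfl; exact (Nat.not_odd_iff_even.2 even_two) hodd
  have hr' : (r : ZMod q) ≠ 0 := by rwa [Ne, ZMod.intCast_zmod_eq_zero_iff_dvd]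
  have hm' : (m : ZMod q) * m1 * m2 = 0 := by
    exact_mod_cast (ZMod.intCast_zmod_eq_zero_iff_dvd _ q).2 hm
  rw [Hr_eq_hrSum, hrSum_of_mul_eq_zero (ZMod.isPrimitive_stdAddChar q) hF hr' hm', ZMod.card,
    Ram_eq_ramanujanSum, Ram_eq_ramanujanSum, Ram_eq_ramanujanSum]
end

section
/- Let q be an odd prime and let χ = χ_q be the Legendre symbol modulo q. Let r, m, m₁, m₂ be integers with q ∤ r m m₁ m₂, and let r̄ be an integer with r r̄ ≡ 1 (mod q). Then H_r(m, m₁, m₂; q) = H(r̄ m m₁ m₂; q). -/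
lemma ec_congr {q : ℕ} {a b : ℤ} (h : (a : ZMod q) = (b : ZMod q)) : ec q a = ec q b := by
  rcases eq_or_ne q 0 with rfl | hq
  · have : a = b := by exact_mod_cast h
    rw [this]
  · have hd : (q : ℤ) ∣ b - a := (ZMod.intCast_eq_intCast_iff_dvd_sub a b q).mp h
    obtain ⟨k, hk⟩ := hd
    have hb : b = a + q * k := by linarith
    subst hb
    unfold ec
    have hq' : (q : ℂ) ≠ 0 := by exact_mod_cast hq
    push_cast
    rw [show 2 * (Real.pi:ℂ) * Complex.I * (a + q * k) / q
        = 2 * (Real.pi:ℂ) * Complex.I * a / q + k * (2 * Real.pi * Complex.I) by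
      field_simp]
    rw [Complex.exp_add, Complex.exp_int_mul_two_pi_mul_I, mul_one]

lemma sum_range_eq_sum_zmod_s6 (q : ℕ) [NeZero q] (f : ℕ → ℂ) :
    ∑ x ∈ Finset.range q, f x = ∑ x : ZMod q, f x.val := by
  refine Finset.sum_nbij' (fun n => (n : ZMod q)) (fun z => z.val) ?_ ?_ ?_ ?_ ?_
  · intro a _; exact Finset.mem_univ _
  · intro b _; exact Finset.mem_range.mpr (ZMod.val_lt b)
  · intro a ha; exact ZMod.val_cast_of_lt (Finset.mem_range.mp ha)
  · intro b _; simp [ZMod.natCast_val, ZMod.cast_id]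
  · intro a ha; rw [ZMod.val_cast_of_lt (Finset.mem_range.mp ha)]


/-- Lemma 10.1, third case: for `q` an odd prime with `q ∤ r m m₁ m₂` and
`r r̄ ≡ 1 (mod q)`, `H_r(m, m₁, m₂; q) = H(r̄ m m₁ m₂; q)`. -/
theorem Hr_eval_of_not_dvd (q : ℕ) (hq : q.Prime) (hodd : Odd q) (r m m1 m2 rb : ℤ)
    (h : ¬ (q : ℤ) ∣ r * m * m1 * m2) (hrb : (q : ℤ) ∣ (r * rb - 1)) :
    Hr r m m1 m2 q = Hw (rb * m * m1 * m2) q := by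
  haveI : Fact q.Prime := ⟨hq⟩
  haveI : NeZero q := ⟨hq.ne_zero⟩
  set R : ZMod q := (r : ZMod q) with hRdef
  set B : ZMod q := (rb : ZMod q) with hBdef
  set M : ZMod q := (m : ZMod q) with hMdef
  set M1 : ZMod q := (m1 : ZMod q) with hM1def
  set M2 : ZMod q := (m2 : ZMod q) with hM2def
  have hRB : R * B = 1 := by
    have h0 : ((r * rb - 1 : ℤ) : ZMod q) = 0 := (ZMod.intCast_zmod_eq_zero_iff_dvd _ q).mpr hrb
    push_cast at h0
    linear_combination h0
  have hprod : R * M * M1 * M2 ≠ 0 := by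
    intro hc
    apply h
    rw [← ZMod.intCast_zmod_eq_zero_iff_dvd]
    push_cast
    exact hc
  have hM2ne : M2 ≠ 0 := fun hc => hprod (by rw [hc, mul_zero])
  have hM1ne : M1 ≠ 0 := fun hc => hprod (by rw [hc]; ring)
  have hMne : M ≠ 0 := fun hc => hprod (by rw [hc]; ring)
  have hBne : B ≠ 0 := right_ne_zero_of_mul_eq_one hRB
  have hHr : Hr r m m1 m2 q = ∑ u : ZMod q, ∑ v : ZMod q,
      ((quadraticChar (ZMod q) (v * (u + v * M1) * (v * R - M) * (u * R + M * M1)) : ℤ) : ℂ) *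
        ec q ((u * M2).val : ℤ) := by
    unfold Hr
    rw [sum_range_eq_sum_zmod_s6]
    refine Finset.sum_congr rfl fun u _ => ?_
    rw [sum_range_eq_sum_zmod_s6]
    refine Finset.sum_congr rfl fun v _ => ?_
    congr 1
    · have : jacobiSym ((v.val : ℤ) * ((u.val : ℤ) + v.val * m1) * ((v.val : ℤ) * r - m) *
          ((u.val : ℤ) * r + m * m1)) q
          = quadraticChar (ZMod q) (v * (u + v * M1) * (v * R - M) * (u * R + M * M1)) := by
        rw [← jacobiSym.legendreSym.to_jacobiSym q]
        unfold legendreSym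
        congr 1
        push_cast
        simp [ZMod.natCast_val, ZMod.cast_id, hRdef, hMdef, hM1def]
      exact_mod_cast this
    · apply ec_congr
      push_cast
      simp [ZMod.natCast_val, ZMod.cast_id, hM2def]
  have hHw : Hw (rb * m * m1 * m2) q = ∑ u : ZMod q, ∑ v : ZMod q,
      ((quadraticChar (ZMod q) (u * v * (u + 1) * (v + 1)) : ℤ) : ℂ) *
        ec q (((u * v - 1) * (B * M * M1 * M2)).val : ℤ) := by
    unfold Hw
    rw [sum_range_eq_sum_zmod_s6]
    refine Finset.sum_congr rfl fun u _ => ?_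
    rw [sum_range_eq_sum_zmod_s6]
    refine Finset.sum_congr rfl fun v _ => ?_
    congr 1
    · have : jacobiSym ((u.val : ℤ) * v.val * ((u.val : ℤ) + 1) * ((v.val : ℤ) + 1)) q
          = quadraticChar (ZMod q) (u * v * (u + 1) * (v + 1)) := by
        rw [← jacobiSym.legendreSym.to_jacobiSym q]
        unfold legendreSym
        congr 1
        push_cast
        simp [ZMod.natCast_val, ZMod.cast_id]
      exact_mod_cast this
    · apply ec_congr
      push_cast
      simp [ZMod.natCast_val, ZMod.cast_id, hBdef, hMdef, hM1def, hM2def]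
  rw [hHr, hHw, ← Fintype.sum_prod_type', ← Fintype.sum_prod_type']
  set Φ : ZMod q × ZMod q → ZMod q × ZMod q := fun p =>
    if p.2 = 0 then (p.1, B * M) else (B * M * M1 * (p.1 * p.2 - 1), B * M * (p.2 + 1)) with hΦ
  have hinj : Function.Injective Φ := by
    have hBM : B * M ≠ 0 := mul_ne_zero hBne hMne
    rintro ⟨u1, v1⟩ ⟨u2, v2⟩ hEq
    by_cases h1 : v1 = 0 <;> by_cases h2 : v2 = 0 <;>
      simp only [hΦ, h1, h2, if_pos, if_neg, Prod.mk.injEq, if_true, if_false] at hEq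
    · exact Prod.ext hEq.1 (h1.trans h2.symm)
    · exfalso
      have : B * M * 1 = B * M * (v2 + 1) := by rw [mul_one]; exact hEq.2
      have := mul_left_cancel₀ hBM this
      exact h2 (by linear_combination -this)
    · exfalso
      have : B * M * (v1 + 1) = B * M * 1 := by rw [mul_one]; exact hEq.2
      have := mul_left_cancel₀ hBM this
      exact h1 (by linear_combination this)
    · have hv : v1 = v2 := by
        have := mul_left_cancel₀ hBM hEq.2
        linear_combination this
      subst hv
      have hu : u1 * v1 = u2 * v1 := by
        have := mul_left_cancel₀ (mul_ne_zero hBM hM1ne) hEq.1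
        linear_combination this
      exact Prod.ext (mul_right_cancel₀ h1 hu) rfl
  have hbij : Function.Bijective Φ := Finite.injective_iff_bijective.mp hinj
  refine (Fintype.sum_bijective Φ hbij _ _ ?_).symm
  rintro ⟨u, v⟩
  by_cases hv : v = 0
  · simp only [hΦ, hv, if_pos, if_true]
    have lz : u * (0 : ZMod q) * (u + 1) * ((0:ZMod q) + 1) = 0 := by ring
    have rz : (B * M) * (u + (B * M) * M1) * ((B * M) * R - M) * (u * R + M * M1) = 0 := by
      linear_combination ((B * M) * (u + (B * M) * M1) * (u * R + M * M1) * M) * hRB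
    rw [lz, rz, quadraticChar_zero]
    simp
  · simp only [hΦ, hv, if_neg, if_false]
    have key : (B * M * (v + 1)) * ((B * M * M1 * (u * v - 1)) + (B * M * (v + 1)) * M1) *
        ((B * M * (v + 1)) * R - M) * ((B * M * M1 * (u * v - 1)) * R + M * M1)
        = (B * M ^ 2 * M1 * v) ^ 2 * (u * v * (u + 1) * (v + 1)) := by
      linear_combination ((B * M * (v + 1)) * (B * M * M1 * v * (u + 1)) * (M ^ 2 * M1) *
        (v * (u * v - 1) + u * v * (v + 1) + (v + 1) * (u * v - 1) * (R * B - 1))) * hRB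
    have hsq : (quadraticChar (ZMod q)) ((B * M ^ 2 * M1 * v) ^ 2 * (u * v * (u + 1) * (v + 1)))
        = (quadraticChar (ZMod q)) (u * v * (u + 1) * (v + 1)) := by
      rw [map_mul, quadraticChar_sq_one'
        (mul_ne_zero (mul_ne_zero (mul_ne_zero hBne (pow_ne_zero 2 hMne)) hM1ne) hv), one_mul]
    rw [key, hsq, show (u * v - 1) * (B * M * M1 * M2) = B * M * M1 * (u * v - 1) * M2 from by ring]
end

section
/- Let q₁, q₂ be coprime odd squarefree positive integers and q = q₁ q₂. Let q̄₁ be an integer with q̄₁ q₁ ≡ 1 (mod q₂) and q̄₂ an integer with q̄₂ q₂ ≡ 1 (mod q₁). Then for all integers r, m, m₁, m₂: H_r(m, m₁, m₂; q₁ q₂) = H_r(m, m₁ q̄₁, m₂; q₂) · H_r(m, m₁, m₂ q̄₂; q₁), where the left-hand sum uses the Jacobi symbol χ_{q₁ q₂} and the two right-hand sums use χ_{q₂} and χ_{q₁} respectively. -/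
/- ### auxiliary lemmas -/

lemma ec_congr_s7 {N : ℕ} (hN : N ≠ 0) {x y : ℤ} (h : (N : ℤ) ∣ (x - y)) : ec N x = ec N y := by
  obtain ⟨k, hk⟩ := h
  have hNC : (N : ℂ) ≠ 0 := Nat.cast_ne_zero.mpr hN
  have hx : (x : ℂ) = (y : ℂ) + (N : ℂ) * (k : ℂ) := by
    have := congrArg (fun z : ℤ => (z : ℂ)) hk
    push_cast at this
    linear_combination this
  unfold ec
  rw [show 2 * Real.pi * Complex.I * (x : ℂ) / N
      = 2 * Real.pi * Complex.I * (y : ℂ) / N + (k : ℂ) * (2 * Real.pi * Complex.I) by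
    rw [hx]; field_simp]
  rw [Complex.exp_add, Complex.exp_int_mul_two_pi_mul_I, mul_one]

lemma ec_congr' {N : ℕ} (hN : N ≠ 0) {x y : ℤ} (h : x ≡ y [ZMOD N]) : ec N x = ec N y :=
  ec_congr_s7 hN (Int.ModEq.dvd h.symm)

lemma ec_lift {q1 : ℕ} (q2 : ℕ) (h1 : q1 ≠ 0) (h2 : q2 ≠ 0) (y : ℤ) :
    ec (q1 * q2) ((q2 : ℤ) * y) = ec q1 y := by
  have hc1 : (q1 : ℂ) ≠ 0 := Nat.cast_ne_zero.mpr h1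
  have hc2 : (q2 : ℂ) ≠ 0 := Nat.cast_ne_zero.mpr h2
  unfold ec
  congr 1
  push_cast
  field_simp

lemma ec_lift2 {q2 : ℕ} (q1 : ℕ) (h1 : q1 ≠ 0) (h2 : q2 ≠ 0) (y : ℤ) :
    ec (q1 * q2) ((q1 : ℤ) * y) = ec q2 y := by
  rw [mul_comm q1 q2]; exact ec_lift q1 h2 h1 y

lemma ec_add (N : ℕ) (x y : ℤ) : ec N (x + y) = ec N x * ec N y := by
  unfold ec
  rw [← Complex.exp_add]
  congr 1
  push_cast
  ring

lemma jac_congr {a b : ℤ} {n : ℕ} (h : a ≡ b [ZMOD n]) :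
    (jacobiSym a n) = jacobiSym b n := jacobiSym.mod_left' h

lemma gcd_one_of_dvd {a b : ℤ} {n : ℕ} (h : (n : ℤ) ∣ (a * b - 1)) : Int.gcd a n = 1 := by
  obtain ⟨k, hk⟩ := h
  have : IsCoprime a (n : ℤ) := ⟨b, -k, by linear_combination hk⟩
  exact Int.isCoprime_iff_gcd_eq_one.mp this

lemma crt_sum (q1 q2 : ℕ) (h1 : 0 < q1) (h2 : 0 < q2) (hco : Nat.Coprime q1 q2)
    (F F1 F2 : ℕ → ℂ) (hF : ∀ a, F a = F1 (a % q1) * F2 (a % q2)) :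
    ∑ a ∈ Finset.range (q1 * q2), F a
      = (∑ a ∈ Finset.range q1, F1 a) * (∑ a ∈ Finset.range q2, F2 a) := by
  rw [Finset.sum_mul_sum, ← Finset.sum_product']
  refine Finset.sum_nbij' (fun a => (a % q1, a % q2))
    (fun p => (Nat.chineseRemainder hco p.1 p.2 : ℕ) % (q1 * q2)) ?_ ?_ ?_ ?_ ?_
  · intro a _
    simp [Finset.mem_product, Nat.mod_lt _ h1, Nat.mod_lt _ h2]
  · intro p _
    exact Finset.mem_range.mpr (Nat.mod_lt _ (Nat.mul_pos h1 h2))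
  · intro a ha
    have ha' : a < q1 * q2 := Finset.mem_range.mp ha
    obtain ⟨hk1, hk2⟩ := (Nat.chineseRemainder hco (a % q1) (a % q2)).2
    have h1' : (Nat.chineseRemainder hco (a % q1) (a % q2) : ℕ) ≡ a [MOD q1] :=
      hk1.trans (Nat.mod_modEq a q1)
    have h2' : (Nat.chineseRemainder hco (a % q1) (a % q2) : ℕ) ≡ a [MOD q2] :=
      hk2.trans (Nat.mod_modEq a q2)
    have := (Nat.modEq_and_modEq_iff_modEq_mul hco).mp ⟨h1', h2'⟩
    simpa [Nat.ModEq, Nat.mod_eq_of_lt ha'] using this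
  · intro p hp
    rw [Finset.mem_product] at hp
    obtain ⟨hp1, hp2⟩ := hp
    obtain ⟨hk1, hk2⟩ := (Nat.chineseRemainder hco p.1 p.2).2
    have e1 : (Nat.chineseRemainder hco p.1 p.2 : ℕ) % (q1 * q2) % q1 = p.1 := by
      rw [Nat.mod_mod_of_dvd _ ⟨q2, rfl⟩]
      simpa [Nat.ModEq, Nat.mod_eq_of_lt (Finset.mem_range.mp hp1)] using hk1
    have e2 : (Nat.chineseRemainder hco p.1 p.2 : ℕ) % (q1 * q2) % q2 = p.2 := by
      rw [Nat.mod_mod_of_dvd _ ⟨q1, mul_comm q1 q2⟩]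
      simpa [Nat.ModEq, Nat.mod_eq_of_lt (Finset.mem_range.mp hp2)] using hk2
    exact Prod.ext e1 e2
  · intro a _
    exact hF a

/-- the Jacobi-symbol argument of `Hr`, as a two-variable integer function. -/
def fH (r m m1 u v : ℤ) : ℤ := v * (u + v * m1) * (v * r - m) * (u * r + m * m1)

lemma fH_congr (r m m1 : ℤ) {n : ℕ} {u u' v v' : ℤ}
    (hu : u ≡ u' [ZMOD n]) (hv : v ≡ v' [ZMOD n]) :
    fH r m m1 u v ≡ fH r m m1 u' v' [ZMOD n] := by
  unfold fH
  exact ((hv.mul (hu.add (hv.mul_right m1))).mul ((hv.mul_right r).sub_right m)).mul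
    ((hu.mul_right r).add_right (m * m1))

/-- scaling step: `Hr` with twisted `m₁` equals the untwisted sum with twisted exponential. -/
lemma Hr_scale (q2 : ℕ) (h2 : 0 < q2) (q1 : ℕ) (hq1 : 0 < q1) (qb1 : ℤ)
    (hqb1 : (q2 : ℤ) ∣ (qb1 * q1 - 1)) (r m m1 m2 : ℤ) :
    Hr r m (m1 * qb1) m2 q2
      = ∑ u ∈ Finset.range q2, ∑ v ∈ Finset.range q2,
          (jacobiSym (fH r m m1 u v) q2 : ℂ) * ec q2 ((u : ℤ) * (m2 * qb1)) := by
  have hq2 : q2 ≠ 0 := h2.ne'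
  have hq2Z : (0 : ℤ) < (q2 : ℤ) := by exact_mod_cast h2
  have hq2Z' : ((q2 : ℤ)) ≠ 0 := hq2Z.ne'
  have hgcd : Int.gcd qb1 q2 = 1 := gcd_one_of_dvd hqb1
  obtain ⟨k, hk⟩ := hqb1
  unfold Hr
  refine Eq.symm (Finset.sum_nbij' (fun u => ((qb1 * (u : ℤ)) % (q2 : ℤ)).toNat)
    (fun w => (q1 * w) % q2) ?_ ?_ ?_ ?_ ?_)
  · intro u _
    have h1' := Int.emod_nonneg (qb1 * (u : ℤ)) hq2Z'
    have h2' := Int.emod_lt_of_pos (qb1 * (u : ℤ)) hq2Z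
    simp only [Finset.mem_range]
    omega
  · intro w _
    exact Finset.mem_range.mpr (Nat.mod_lt _ h2)
  · intro u hu
    have hu' : u < q2 := Finset.mem_range.mp hu
    have h1' := Int.emod_nonneg (qb1 * (u : ℤ)) hq2Z'
    have hiu : ((((qb1 * (u : ℤ)) % (q2 : ℤ)).toNat : ℤ)) = (qb1 * (u : ℤ)) % (q2 : ℤ) :=
      Int.toNat_of_nonneg h1'
    -- show (q1 * toNat) % q2 = u in ℕ, via ℤ
    have e1 : ((qb1 * (u : ℤ)) % (q2 : ℤ)) ≡ qb1 * u [ZMOD (q2 : ℕ)] :=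
      Int.emod_emod_of_dvd _ dvd_rfl
    have e2 : (q1 : ℤ) * ((qb1 * (u : ℤ)) % (q2 : ℤ)) ≡ (q1 : ℤ) * (qb1 * u) [ZMOD (q2 : ℕ)] :=
      e1.mul_left _
    have e3 : (q1 : ℤ) * (qb1 * u) ≡ (u : ℤ) [ZMOD (q2 : ℕ)] := by
      refine (Int.modEq_iff_dvd.mpr ?_).symm
      exact ⟨k * u, by linear_combination (u : ℤ) * hk⟩
    have e4 := e2.trans e3
    have e5 : ((q1 : ℤ) * ((qb1 * (u : ℤ)) % (q2 : ℤ))) % (q2 : ℤ) = (u : ℤ) := by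
      have : ((u : ℤ)) % (q2 : ℤ) = (u : ℤ) :=
        Int.emod_eq_of_lt (by positivity) (by exact_mod_cast hu')
      rw [show ((q1 : ℤ) * ((qb1 * (u : ℤ)) % (q2 : ℤ))) % (q2 : ℤ) = ((u : ℤ)) % (q2 : ℤ) from e4,
        this]
    have : (((q1 * ((qb1 * (u : ℤ)) % (q2 : ℤ)).toNat) % q2 : ℕ) : ℤ) = ((u : ℕ) : ℤ) := by
      push_cast
      rw [hiu]
      exact e5
    exact_mod_cast this
  · intro w hw
    have hw' : w < q2 := Finset.mem_range.mp hw
    have e1 : ((((q1 * w) % q2 : ℕ)) : ℤ) ≡ (q1 : ℤ) * w [ZMOD (q2 : ℕ)] := by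
      push_cast
      exact Int.emod_emod_of_dvd _ dvd_rfl
    have e2 : qb1 * ((((q1 * w) % q2 : ℕ)) : ℤ) ≡ qb1 * ((q1 : ℤ) * w) [ZMOD (q2 : ℕ)] :=
      e1.mul_left _
    have e3 : qb1 * ((q1 : ℤ) * w) ≡ (w : ℤ) [ZMOD (q2 : ℕ)] := by
      refine (Int.modEq_iff_dvd.mpr ?_).symm
      exact ⟨k * w, by linear_combination (w : ℤ) * hk⟩
    have e4 := e2.trans e3
    have e5 : (qb1 * ((((q1 * w) % q2 : ℕ)) : ℤ)) % (q2 : ℤ) = (w : ℤ) := by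
      have : ((w : ℤ)) % (q2 : ℤ) = (w : ℤ) :=
        Int.emod_eq_of_lt (by positivity) (by exact_mod_cast hw')
      rw [show (qb1 * ((((q1 * w) % q2 : ℕ)) : ℤ)) % (q2 : ℤ) = ((w : ℤ)) % (q2 : ℤ) from e4, this]
    show ((qb1 * ((((q1 * w) % q2 : ℕ)) : ℤ)) % (q2 : ℤ)).toNat = w
    rw [e5]
    exact Int.toNat_natCast w
  · intro u _
    refine Finset.sum_congr rfl fun v _ => ?_
    have h1' := Int.emod_nonneg (qb1 * (u : ℤ)) hq2Z'
    have hiu : ((((qb1 * (u : ℤ)) % (q2 : ℤ)).toNat : ℤ)) = (qb1 * (u : ℤ)) % (q2 : ℤ) :=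
      Int.toNat_of_nonneg h1'
    have hw : ((qb1 * (u : ℤ)) % (q2 : ℤ)) ≡ qb1 * u [ZMOD (q2 : ℕ)] :=
      Int.emod_emod_of_dvd _ dvd_rfl
    have hwc : ((((qb1 * (u : ℤ)) % (q2 : ℤ)).toNat : ℤ)) ≡ qb1 * u [ZMOD (q2 : ℕ)] := by
      rw [hiu]; exact hw
    -- Jacobi part
    have jc : jacobiSym ((v : ℤ) * ((((qb1 * (u : ℤ)) % (q2 : ℤ)).toNat : ℤ) + (v : ℤ) * (m1 * qb1))
          * ((v : ℤ) * r - m) * ((((qb1 * (u : ℤ)) % (q2 : ℤ)).toNat : ℤ) * r + m * (m1 * qb1))) q2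
        = jacobiSym (fH r m m1 u v) q2 := by
      have c1 : (v : ℤ) * ((((qb1 * (u : ℤ)) % (q2 : ℤ)).toNat : ℤ) + (v : ℤ) * (m1 * qb1))
            * ((v : ℤ) * r - m) * ((((qb1 * (u : ℤ)) % (q2 : ℤ)).toNat : ℤ) * r + m * (m1 * qb1))
          ≡ (v : ℤ) * (qb1 * u + (v : ℤ) * (m1 * qb1)) * ((v : ℤ) * r - m)
            * (qb1 * u * r + m * (m1 * qb1)) [ZMOD (q2 : ℕ)] :=
        ((Int.ModEq.mul ((hwc.add_right _).mul_left _) (Int.ModEq.refl _)).mul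
          ((hwc.mul_right r).add_right _))
      rw [jac_congr c1,
        show (v : ℤ) * (qb1 * u + (v : ℤ) * (m1 * qb1)) * ((v : ℤ) * r - m)
            * (qb1 * u * r + m * (m1 * qb1)) = qb1 ^ 2 * fH r m m1 u v by unfold fH; ring,
        jacobiSym.mul_left, jacobiSym.sq_one' hgcd, one_mul]
    -- exponential part
    have ecc : ec q2 ((((qb1 * (u : ℤ)) % (q2 : ℤ)).toNat : ℤ) * m2)
        = ec q2 ((u : ℤ) * (m2 * qb1)) := by
      refine ec_congr' hq2 ?_
      have := hwc.mul_right m2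
      rw [show qb1 * (u : ℤ) * m2 = (u : ℤ) * (m2 * qb1) by ring] at this
      exact this
    rw [jc, ecc]

lemma natmod_modEq (n a : ℕ) : ((a % n : ℕ) : ℤ) ≡ (a : ℤ) [ZMOD n] := by
  have : ((a % n : ℕ) : ℤ) = (a : ℤ) % (n : ℤ) := by push_cast; ring
  rw [this]
  exact Int.emod_emod_of_dvd _ dvd_rfl

/-- twisted multiplicativity of `H_r` in the modulus: for coprime odd squarefree
`q₁, q₂`, `H_r(m, m₁, m₂; q₁ q₂) = H_r(m, m₁ q̄₁, m₂; q₂) ⬝ H_r(m, m₁, m₂ q̄₂; q₁)`. -/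
theorem Hr_mul (q1 q2 : ℕ) (h1 : 0 < q1) (h2 : 0 < q2) (hodd1 : Odd q1) (hodd2 : Odd q2)
    (hsf1 : Squarefree q1) (hsf2 : Squarefree q2) (hco : Nat.Coprime q1 q2)
    (qb1 qb2 : ℤ) (hqb1 : (q2 : ℤ) ∣ (qb1 * q1 - 1)) (hqb2 : (q1 : ℤ) ∣ (qb2 * q2 - 1))
    (r m m1 m2 : ℤ) :
    Hr r m m1 m2 (q1 * q2) = Hr r m (m1 * qb1) m2 q2 * Hr r m m1 (m2 * qb2) q1 := by
  have hq1 : q1 ≠ 0 := h1.ne'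
  have hq2 : q2 ≠ 0 := h2.ne'
  have hcopZ : IsCoprime (q1 : ℤ) (q2 : ℤ) := by
    rw [Int.isCoprime_iff_gcd_eq_one, Int.gcd_natCast_natCast]; exact hco
  have done : ((q1 * q2 : ℕ) : ℤ) ∣ ((q2 : ℤ) * qb2 + (q1 : ℤ) * qb1 - 1) := by
    push_cast
    refine hcopZ.mul_dvd ?_ ?_
    · obtain ⟨k2, hk2⟩ := hqb2
      exact ⟨k2 + qb1, by linear_combination hk2⟩
    · obtain ⟨k1, hk1⟩ := hqb1
      exact ⟨qb2 + k1, by linear_combination hk1⟩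
  rw [Hr_scale q2 h2 q1 h1 qb1 hqb1 r m m1 m2]
  show (∑ u ∈ Finset.range (q1 * q2), ∑ v ∈ Finset.range (q1 * q2),
      (jacobiSym (fH r m m1 u v) (q1 * q2) : ℂ) * ec (q1 * q2) ((u : ℤ) * m2))
    = (∑ u ∈ Finset.range q2, ∑ v ∈ Finset.range q2,
        (jacobiSym (fH r m m1 u v) q2 : ℂ) * ec q2 ((u : ℤ) * (m2 * qb1)))
      * (∑ u ∈ Finset.range q1, ∑ v ∈ Finset.range q1,
        (jacobiSym (fH r m m1 u v) q1 : ℂ) * ec q1 ((u : ℤ) * (m2 * qb2)))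
  refine Eq.trans (crt_sum q1 q2 h1 h2 hco _
    (fun u1 => ∑ v ∈ Finset.range q1,
      (jacobiSym (fH r m m1 u1 v) q1 : ℂ) * ec q1 ((u1 : ℤ) * (m2 * qb2)))
    (fun u2 => ∑ v ∈ Finset.range q2,
      (jacobiSym (fH r m m1 u2 v) q2 : ℂ) * ec q2 ((u2 : ℤ) * (m2 * qb1))) ?_) (mul_comm _ _)
  intro u
  refine crt_sum q1 q2 h1 h2 hco _
    (fun v1 => (jacobiSym (fH r m m1 ((u % q1 : ℕ) : ℤ) v1) q1 : ℂ)
      * ec q1 (((u % q1 : ℕ) : ℤ) * (m2 * qb2)))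
    (fun v2 => (jacobiSym (fH r m m1 ((u % q2 : ℕ) : ℤ) v2) q2 : ℂ)
      * ec q2 (((u % q2 : ℕ) : ℤ) * (m2 * qb1))) ?_
  intro v
  have j1 : jacobiSym (fH r m m1 u v) q1
      = jacobiSym (fH r m m1 ((u % q1 : ℕ) : ℤ) ((v % q1 : ℕ) : ℤ)) q1 :=
    jac_congr (fH_congr r m m1 (natmod_modEq q1 u).symm (natmod_modEq q1 v).symm)
  have j2 : jacobiSym (fH r m m1 u v) q2
      = jacobiSym (fH r m m1 ((u % q2 : ℕ) : ℤ) ((v % q2 : ℕ) : ℤ)) q2 :=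
    jac_congr (fH_congr r m m1 (natmod_modEq q2 u).symm (natmod_modEq q2 v).symm)
  have jsplit : jacobiSym (fH r m m1 u v) (q1 * q2)
      = jacobiSym (fH r m m1 u v) q1 * jacobiSym (fH r m m1 u v) q2 :=
    jacobiSym.mul_right' _ hq1 hq2
  have d1 : (q1 : ℤ) ∣ ((u : ℤ) - ((u % q1 : ℕ) : ℤ)) := (natmod_modEq q1 u).dvd
  have d2 : (q2 : ℤ) ∣ ((u : ℤ) - ((u % q2 : ℕ) : ℤ)) := (natmod_modEq q2 u).dvd
  have ecsplit : ec (q1 * q2) ((u : ℤ) * m2)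
      = ec q1 (((u % q1 : ℕ) : ℤ) * (m2 * qb2)) * ec q2 (((u % q2 : ℕ) : ℤ) * (m2 * qb1)) := by
    rw [← ec_lift q2 hq1 hq2 (((u % q1 : ℕ) : ℤ) * (m2 * qb2)),
      ← ec_lift2 q1 hq1 hq2 (((u % q2 : ℕ) : ℤ) * (m2 * qb1)), ← ec_add]
    refine ec_congr_s7 (Nat.mul_ne_zero hq1 hq2) ?_
    obtain ⟨c1, hc1⟩ := d1
    obtain ⟨c2, hc2⟩ := d2
    obtain ⟨c3, hc3⟩ := done
    refine ⟨m2 * qb2 * c1 + m2 * qb1 * c2 - (u : ℤ) * m2 * c3, ?_⟩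
    push_cast at hc1 hc2 hc3 ⊢
    linear_combination ((q2 : ℤ) * m2 * qb2) * hc1 + ((q1 : ℤ) * m2 * qb1) * hc2
      - ((u : ℤ) * m2) * hc3
  rw [jsplit, j1, j2, ecsplit]
  push_cast
  ring
end

section
/- Let q ≥ 1 be odd and squarefree. Then Σ_{u, v mod q, u v ≡ 1 (mod q)} χ_q( u v (u + 1)(v + 1) ) = μ(q) χ_q(−1), where μ is the Möbius function. -/
/-!
For a unit `u` the condition `u v = 1` forces `v = u⁻¹`, and then
`u v (u + 1)(v + 1) = u⁻² · u (u + 1)²`; non-units contribute nothing. So the double sum is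
`T(q) = Σ_{x mod q} χ_q(x (x + 1)²)`. By the Chinese remainder theorem `T` is multiplicative, and
for an odd prime `p` we have `χ_p(x + 1)² = 1` unless `x = -1`, so
`T(p) = Σ_x χ_p(x) - χ_p(-1) = -χ_p(-1)`.
-/

open Finset

theorem Finset.sum_range_eq_sum_zmod_val {M : Type*} [AddCommMonoid M] (q : ℕ) [NeZero q]
    (f : ℕ → M) : ∑ u ∈ range q, f u = ∑ x : ZMod q, f x.val := by
  obtain ⟨n, rfl⟩ := Nat.exists_eq_succ_of_ne_zero (NeZero.ne q)
  exact (Fin.sum_univ_eq_sum_range _ _).symm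

theorem jacobiSym_val_intCast {q : ℕ} [NeZero q] (a : ℤ) :
    jacobiSym ((a : ZMod q).val : ℤ) q = jacobiSym a q :=
  jacobiSym.mod_left' ((ZMod.intCast_eq_intCast_iff' _ _ q).mp (by simp))

def jacobiChar (q : ℕ) [NeZero q] : MulChar (ZMod q) ℤ where
  toFun x := jacobiSym (x.val : ℤ) q
  map_one' := by
    rw [← Int.cast_one, jacobiSym_val_intCast, jacobiSym.one_left]
  map_mul' x y := by
    obtain ⟨a, rfl⟩ := ZMod.intCast_surjective x
    obtain ⟨b, rfl⟩ := ZMod.intCast_surjective y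
    rw [← Int.cast_mul]
    simp only [jacobiSym_val_intCast, jacobiSym.mul_left]
  map_nonunit' x hx := by
    rw [jacobiSym.eq_zero_iff_not_coprime, Int.gcd_natCast_natCast]
    rwa [← ZMod.natCast_zmod_val x, ZMod.isUnit_iff_coprime] at hx

namespace jacobiChar

variable {q : ℕ} [NeZero q]

theorem apply_intCast (a : ℤ) : jacobiChar q a = jacobiSym a q :=
  jacobiSym_val_intCast a

theorem eq_quadraticChar (p : ℕ) [Fact p.Prime] : jacobiChar p = quadraticChar (ZMod p) := by
  refine MulChar.ext' fun x => ?_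
  obtain ⟨a, rfl⟩ := ZMod.intCast_surjective x
  rw [apply_intCast, ← jacobiSym.legendreSym.to_jacobiSym]
  rfl

theorem apply_chineseRemainder {a b : ℕ} [NeZero a] [NeZero b] (h : a.Coprime b)
    (z : ZMod (a * b)) :
    jacobiChar (a * b) z =
      jacobiChar a (ZMod.chineseRemainder h z).1 * jacobiChar b (ZMod.chineseRemainder h z).2 := by
  obtain ⟨n, rfl⟩ := ZMod.intCast_surjective z
  simp only [map_intCast, Prod.fst_intCast, Prod.snd_intCast, apply_intCast]
  exact jacobiSym.mul_right n a b

end jacobiChar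

theorem MulChar.apply_sq_mul {R : Type*} [CommMonoid R] (χ : MulChar R ℤ) {u : R} (hu : IsUnit u)
    (x : R) : χ (u ^ 2 * x) = χ x := by
  rw [map_mul, map_pow, Int.isUnit_sq (hu.map χ), one_mul]

theorem MulChar.sum_ite_mul_eq_one {R : Type*} [CommRing R] [Fintype R] [DecidableEq R]
    (χ : MulChar R ℤ) (x : R) :
    ∑ y : R, (if x * y = 1 then χ (x * y * (x + 1) * (y + 1)) else 0) =
      χ (x * (x + 1) ^ 2) := by
  by_cases hx : IsUnit x
  · have hinv : x * ↑hx.unit⁻¹ = 1 := hx.mul_val_inv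
    have hne : ∀ y, y ≠ ↑hx.unit⁻¹ → x * y ≠ 1 := fun y hy hxy =>
      hy (hx.mul_left_cancel (hxy.trans hinv.symm))
    rw [Fintype.sum_eq_single _ fun y hy => if_neg (hne y hy), if_pos hinv, ← χ.apply_sq_mul hx]
    congr 1
    linear_combination x * (x + 1) * (x * ↑hx.unit⁻¹ + 1 + x) * hinv
  · have hy : ∀ y, ¬ x * y = 1 := fun y hxy => hx (.of_mul_eq_one y hxy)
    simp only [hy, if_false, sum_const_zero]
    exact (χ.map_nonunit fun h => hx (isUnit_of_mul_isUnit_left h)).symm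

def jacobiSumMulSuccSq (q : ℕ) [NeZero q] : ℤ := ∑ x : ZMod q, jacobiChar q (x * (x + 1) ^ 2)

theorem jacobiSumMulSuccSq_mul {a b : ℕ} [NeZero a] [NeZero b] (h : a.Coprime b) :
    jacobiSumMulSuccSq (a * b) = jacobiSumMulSuccSq a * jacobiSumMulSuccSq b := by
  rw [jacobiSumMulSuccSq, jacobiSumMulSuccSq, jacobiSumMulSuccSq, sum_mul_sum,
    ← Fintype.sum_prod_type', ← (ZMod.chineseRemainder h).toEquiv.sum_comp]
  refine Fintype.sum_congr _ _ fun z => ?_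
  rw [jacobiChar.apply_chineseRemainder h, map_mul, map_pow, map_add, map_one]
  rfl

theorem jacobiSumMulSuccSq_prime (p : ℕ) [Fact p.Prime] (hp : p ≠ 2) :
    jacobiSumMulSuccSq p = -jacobiSym (-1) p := by
  have hchar : ringChar (ZMod p) ≠ 2 := by rwa [ZMod.ringChar_zmod_n]
  have hterm : ∀ x : ZMod p, quadraticChar (ZMod p) (x * (x + 1) ^ 2) =
      quadraticChar (ZMod p) x - if x = -1 then quadraticChar (ZMod p) (-1) else 0 := by
    intro x
    split_ifs with hx
    · simp [hx]
    · rw [map_mul, map_pow, quadraticChar_sq_one fun h => hx (eq_neg_of_add_eq_zero_left h)]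
      ring
  rw [jacobiSumMulSuccSq, jacobiChar.eq_quadraticChar, Fintype.sum_congr _ _ hterm, sum_sub_distrib,
    quadraticChar_sum_zero hchar, sum_ite_eq', if_pos (mem_univ _), ← jacobiChar.eq_quadraticChar,
    ← Int.cast_one, ← Int.cast_neg, jacobiChar.apply_intCast, zero_sub]

theorem jacobiSumMulSuccSq_of_squarefree (q : ℕ) [NeZero q] (hodd : Odd q) (hsf : Squarefree q) :
    jacobiSumMulSuccSq q = ArithmeticFunction.moebius q * jacobiSym (-1) q := by
  revert hodd hsf ‹NeZero q›
  induction q using induction_on_primes with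
  | zero => exact fun _ => (NeZero.ne (0 : ℕ) rfl).elim
  | one => simp [jacobiSumMulSuccSq, jacobiChar]
  | prime_mul p a hp ih =>
    intro _ hodd hsf
    have : Fact p.Prime := ⟨hp⟩
    have : NeZero a := ⟨right_ne_zero_of_mul (NeZero.ne (p * a))⟩
    have hp2 : p ≠ 2 := by rintro rfl; exact absurd (Nat.Odd.of_mul_left hodd) (by decide)
    have hpa : p.Coprime a := Nat.coprime_of_squarefree_mul hsf
    rw [jacobiSumMulSuccSq_mul hpa, jacobiSumMulSuccSq_prime p hp2,
      ih (Nat.Odd.of_mul_right hodd) hsf.of_mul_right,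
      ArithmeticFunction.isMultiplicative_moebius.map_mul_of_coprime hpa,
      ArithmeticFunction.moebius_apply_prime hp, jacobiSym.mul_right]
    ring

/-- for `q ≥ 1` odd squarefree,
`Σ_{u v ≡ 1 (mod q)} χ_q(u v (u+1)(v+1)) = μ(q) χ_q(−1)`. -/
theorem sum_uv_eq_one (q : ℕ) (hq : 1 ≤ q) (hodd : Odd q) (hsf : Squarefree q) :
    (∑ u ∈ Finset.range q, ∑ v ∈ Finset.range q,
        if (u * v) % q = 1 % q then
          (jacobiSym ((u : ℤ) * v * ((u : ℤ) + 1) * ((v : ℤ) + 1)) q : ℂ)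
        else 0) =
      (ArithmeticFunction.moebius q : ℂ) * (jacobiSym (-1) q : ℂ) := by
  have : NeZero q := ⟨by omega⟩
  have hcond (x y : ZMod q) : (x.val * y.val) % q = 1 % q ↔ x * y = 1 := by
    rw [← ZMod.natCast_eq_natCast_iff', Nat.cast_mul, ZMod.natCast_zmod_val,
      ZMod.natCast_zmod_val, Nat.cast_one]
  have hval (x y : ZMod q) :
      jacobiSym ((x.val : ℤ) * y.val * ((x.val : ℤ) + 1) * ((y.val : ℤ) + 1)) q =
        jacobiChar q (x * y * (x + 1) * (y + 1)) := by
    rw [← jacobiChar.apply_intCast]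
    push_cast [ZMod.natCast_zmod_val]
    rfl
  have hsum : (∑ x : ZMod q, ∑ y : ZMod q,
      if x * y = 1 then jacobiChar q (x * y * (x + 1) * (y + 1)) else 0) =
      ArithmeticFunction.moebius q * jacobiSym (-1) q := by
    simp only [MulChar.sum_ite_mul_eq_one]
    exact jacobiSumMulSuccSq_of_squarefree q hodd hsf
  simp only [Finset.sum_range_eq_sum_zmod_val, hcond, hval]
  exact_mod_cast hsum
end

section
/- Let F be a finite field with q elements and let χ be a nontrivial multiplicative character of F^× , extended to F by χ(0) = 0. Then Σ_{u₁, v₁, u₂, v₂ ∈ F, u₁ v₁ = u₂ v₂} χ( u₁ v₁ (u₁ + 1)(v₁ + 1) ) · conj( χ( u₂ v₂ (u₂ + 1)(v₂ + 1) ) ) = q² − 2q − 2. -/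
/-!
Grouping the quadruples by `t = u₁v₁ = u₂v₂`, the sum is `∑ₜ |S t|²` with
`S t = ∑_{uv = t} χ(uv(u+1)(v+1))`. Substituting `v = t/u` gives `S t = χ t · T t`, where
`T t = ∑ᵤ g u · χ(u + t)` and `g u = χ((u+1)/u)`. Since the correlation
`∑ₜ χ(t+a) χ̄(t+b)` is `q - 1` for `a = b` and `-1` otherwise,
`∑ₜ |T t|² = q ∑ |g|² - |∑ g|² = q(q-2) - 1`, and the factor `|χ t|²` removes the term
`|T 0|² = |∑_{u ≠ 0} χ(u+1)|² = 1`.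
-/

open Finset ComplexConjugate

theorem Fintype.sum_sum_ite_eq_mul_conj {α β R : Type*} [Fintype α] [Fintype β]
    [DecidableEq β] [CommSemiring R] [StarRing R] (f : α → β) (X : α → R) :
    ∑ a, ∑ b, (if f a = f b then X a * conj (X b) else 0) =
      ∑ t, (∑ a, if f a = t then X a else 0) * conj (∑ a, if f a = t then X a else 0) := by
  symm
  simp_rw [map_sum, apply_ite conj, map_zero, sum_mul_sum, ite_mul, mul_ite, zero_mul, mul_zero,
    ite_self]
  rw [sum_comm]
  refine Finset.sum_congr rfl fun a _ => ?_
  rw [sum_comm]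
  refine Finset.sum_congr rfl fun b _ => ?_
  simp [eq_comm]

namespace MulChar

variable {F : Type*} [Field F]

theorem conj_apply [Finite F] (χ : MulChar F ℂ) (x : F) : conj (χ x) = χ x⁻¹ := by
  rw [← inv_apply', ← star_apply']
  rfl

theorem mul_conj_apply [Finite F] [DecidableEq F] (χ : MulChar F ℂ) (x : F) :
    χ x * conj (χ x) = if x = 0 then 0 else 1 := by
  rw [conj_apply, ← map_mul]
  split_ifs with hx
  · simp [hx]
  · rw [mul_inv_cancel₀ hx, map_one]

variable [Fintype F] {χ : MulChar F ℂ}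

theorem sum_mul_conj_apply_mul (χ : MulChar F ℂ) (H : F → ℂ) :
    ∑ t, χ t * conj (χ t) * H t = ∑ t, H t - H 0 := by
  classical
  simp [mul_conj_apply, ite_mul, sum_ite, filter_ne', sum_erase_eq_sub]

theorem sum_mul_conj_self (χ : MulChar F ℂ) :
    ∑ t, χ t * conj (χ t) = Fintype.card F - 1 := by
  simpa using χ.sum_mul_conj_apply_mul 1

theorem sum_apply_add_one (hχ : χ ≠ 1) : ∑ u, χ (u + 1) = 0 :=
  (Equiv.sum_comp (Equiv.addRight 1) χ).trans (sum_eq_zero_of_ne_one hχ)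

theorem sum_apply_add_mul_inv_eq_zero (hχ : χ ≠ 1) (d : F) {c : F} (hc : c ≠ 0) :
    ∑ s, χ (d + c * s⁻¹) = 0 :=
  (Equiv.sum_comp ((Equiv.inv F).trans ((Equiv.mulLeft₀ c hc).trans (Equiv.addLeft d))) χ).trans
    (sum_eq_zero_of_ne_one hχ)

theorem sum_apply_add_mul_conj_apply_of_ne_zero (hχ : χ ≠ 1) {c : F} (hc : c ≠ 0) :
    ∑ s, χ (s + c) * conj (χ s) = -1 := by
  classical
  -- `(s + c) / s = 1 + c / s` except at `s = 0`, where the left side is `χ 0 = 0`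
  have hpoint : ∀ s, χ (s + c) * conj (χ s) = χ (1 + c * s⁻¹) - if s = 0 then 1 else 0 := by
    intro s
    rcases eq_or_ne s 0 with rfl | hs
    · simp
    · rw [conj_apply, ← map_mul, if_neg hs, sub_zero]
      congr 1
      field_simp
  simp [hpoint, sum_sub_distrib, sum_apply_add_mul_inv_eq_zero hχ 1 hc]

theorem sum_apply_add_mul_conj_apply_add [DecidableEq F] (hχ : χ ≠ 1) (a b : F) :
    ∑ t, χ (t + a) * conj (χ (t + b)) = if a = b then (Fintype.card F : ℂ) - 1 else -1 := by
  have hshift : ∑ t, χ (t + a) * conj (χ (t + b)) = ∑ s, χ (s + (a - b)) * conj (χ s) :=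
    Fintype.sum_equiv (Equiv.addRight b) _ _ fun t => by simp
  rw [hshift]
  split_ifs with hab
  · simp_rw [hab, sub_self, add_zero, sum_mul_conj_self]
  · exact sum_apply_add_mul_conj_apply_of_ne_zero hχ (sub_ne_zero.mpr hab)

theorem sum_mul_conj_sum_mul_apply_add (hχ : χ ≠ 1) (g : F → ℂ) :
    ∑ t, (∑ u, g u * χ (u + t)) * conj (∑ u, g u * χ (u + t)) =
      Fintype.card F * ∑ u, g u * conj (g u) - (∑ u, g u) * conj (∑ u, g u) := by
  classical
  calc ∑ t, (∑ u, g u * χ (u + t)) * conj (∑ u, g u * χ (u + t))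
      = ∑ u, ∑ w, g u * conj (g w) * ∑ t, χ (t + u) * conj (χ (t + w)) := by
        simp_rw [map_sum, map_mul, sum_mul_sum, mul_sum]
        rw [sum_comm]
        refine sum_congr rfl fun u _ => ?_
        rw [sum_comm]
        refine sum_congr rfl fun w _ => sum_congr rfl fun t _ => ?_
        rw [add_comm t, add_comm t]
        ring
    _ = ∑ u, ∑ w, g u * conj (g w) * ((if u = w then (Fintype.card F : ℂ) else 0) - 1) := by
        simp_rw [sum_apply_add_mul_conj_apply_add hχ]
        congr! 3 with u _ w _
        split_ifs <;> ring
    _ = _ := by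
        simp_rw [mul_sub, mul_ite, mul_zero, mul_one, sum_sub_distrib]
        rw [map_sum, sum_mul_sum, mul_sum]
        simp_rw [sum_ite_eq, mem_univ, if_true, mul_comm _ (Fintype.card F : ℂ)]

theorem sum_apply_add_one_mul_conj_mul_self (hχ : χ ≠ 1) :
    ∑ u, χ (u + 1) * conj (χ u) * χ u = -1 := by
  calc ∑ u, χ (u + 1) * conj (χ u) * χ u = ∑ u, χ u * conj (χ u) * χ (u + 1) :=
        sum_congr rfl fun u _ => by ring
    _ = -1 := by simp [χ.sum_mul_conj_apply_mul, sum_apply_add_one hχ]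

theorem sum_apply_add_one_mul_conj_mul_conj_self (χ : MulChar F ℂ) :
    ∑ u, χ (u + 1) * conj (χ u) * conj (χ (u + 1) * conj (χ u)) = Fintype.card F - 2 := by
  calc ∑ u, χ (u + 1) * conj (χ u) * conj (χ (u + 1) * conj (χ u))
      = ∑ u, χ u * conj (χ u) * (χ (u + 1) * conj (χ (u + 1))) := by
        simp_rw [map_mul, Complex.conj_conj]
        exact sum_congr rfl fun u _ => by ring
    _ = (Fintype.card F - 1) - 1 := by
        rw [χ.sum_mul_conj_apply_mul, ← χ.sum_mul_conj_self]
        simp only [zero_add, map_one, one_mul, sub_left_inj]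
        exact Equiv.sum_comp (Equiv.addRight 1) fun u => χ u * conj (χ u)
    _ = Fintype.card F - 2 := by ring

theorem sum_sum_ite_mul_eq_apply_mul_sum [DecidableEq F] (χ : MulChar F ℂ) (t : F) :
    ∑ u, ∑ v, (if u * v = t then χ (u * v * (u + 1) * (v + 1)) else 0) =
      χ t * ∑ u, χ (u + 1) * conj (χ u) * χ (u + t) := by
  rw [mul_sum]
  refine sum_congr rfl fun u _ => ?_
  rcases eq_or_ne u 0 with rfl | hu
  · simp
  · have hv : ∀ v, u * v = t ↔ v = t / u := fun v => by rw [eq_div_iff hu, mul_comm]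
    simp_rw [hv, sum_ite_eq', mem_univ, if_true, conj_apply, ← map_mul]
    congr 1
    field_simp
    ring

end MulChar

/-- Lemma 13.2: for a finite field `F` with `q` elements and a nontrivial
multiplicative character `χ` of `F` (extended by `χ(0) = 0`),
`Σ_{u₁ v₁ = u₂ v₂} χ(u₁ v₁ (u₁+1)(v₁+1)) conj(χ(u₂ v₂ (u₂+1)(v₂+1))) = q² − 2q − 2`. -/
theorem lemma_13_2 (F : Type*) [Field F] [Fintype F] [DecidableEq F]
    (χ : MulChar F ℂ) (hχ : χ ≠ 1) :
    (∑ u1 : F, ∑ v1 : F, ∑ u2 : F, ∑ v2 : F,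
        if u1 * v1 = u2 * v2 then
          χ (u1 * v1 * (u1 + 1) * (v1 + 1)) *
            (starRingEnd ℂ) (χ (u2 * v2 * (u2 + 1) * (v2 + 1)))
        else 0) =
      (Fintype.card F : ℂ) ^ 2 - 2 * (Fintype.card F : ℂ) - 2 := by
  set T : F → ℂ := fun t => ∑ u, χ (u + 1) * conj (χ u) * χ (u + t) with hT
  have hfiber := Fintype.sum_sum_ite_eq_mul_conj (fun p : F × F => p.1 * p.2)
    fun p => χ (p.1 * p.2 * (p.1 + 1) * (p.2 + 1))
  simp only [Fintype.sum_prod_type] at hfiber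
  calc _ = ∑ t, χ t * conj (χ t) * (T t * conj (T t)) := by
        rw [hfiber]
        refine sum_congr rfl fun t _ => ?_
        rw [χ.sum_sum_ite_mul_eq_apply_mul_sum, map_mul]
        ring
    _ = ∑ t, T t * conj (T t) - T 0 * conj (T 0) := χ.sum_mul_conj_apply_mul _
    _ = Fintype.card F * (Fintype.card F - 2) - (-1) * conj (-1) - (-1) * conj (-1) := by
        simp only [hT, add_zero]
        rw [MulChar.sum_mul_conj_sum_mul_apply_add hχ, χ.sum_apply_add_one_mul_conj_mul_conj_self,
          MulChar.sum_apply_add_mul_conj_apply_of_ne_zero hχ one_ne_zero,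
          MulChar.sum_apply_add_one_mul_conj_mul_self hχ]
    _ = _ := by
        simp only [map_neg, map_one]
        ring
end

section
/- Let p be an odd prime and χ the Legendre symbol modulo p. Then | Σ_{u, v mod p} χ( u v (u + 1)(v + 1)(u v − 1) ) | ≤ 4p. -/
/-!
Write `χ` for the quadratic character, `E(t) = ∑ᵤ χ(u(u+1)(u+t))` for the character sums of the
Legendre family and `φ(n) = ∑ₓ χ(x(x²+n))` for the Jacobsthal sums. Substituting `v ↦ t/u` turns
the sum into `S = ∑ₜ χ(t(t-1)) E(t)`. Landen's 2-isogeny `E(w²) = χ(-1) E(((1-w)/(1+w))²)`,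
combined with the involution `w ↦ (1-w)/(1+w)`, shows that `∑_w χ(w) E(w²)` equals `S` as well,
and up to the factor `p - 1` this sum is the twisted second moment `∑ₙ χ(n) φ(n)²`. The untwisted
second moment `∑ₙ φ(n)²` equals `p(p-1)(1 + χ(-1))` by orthogonality, so `|S| ≤ 2p`.
-/

open Finset

lemma ZMod.sum_range_natCast {M : Type*} [AddCommMonoid M] (n : ℕ) [NeZero n] (f : ZMod n → M) :
    ∑ i ∈ range n, f i = ∑ x : ZMod n, f x :=
  sum_nbij' Nat.cast ZMod.val (fun _ _ => mem_univ _) (fun x _ => mem_range.mpr x.val_lt)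
    (fun _ hi => ZMod.val_cast_of_lt (mem_range.mp hi)) (fun x _ => ZMod.natCast_zmod_val x)
    fun _ _ => rfl

section

variable {F : Type*} [Field F] [Fintype F] [DecidableEq F]

local notation "χ" => quadraticChar F

lemma quadraticChar_sq_mul {x : F} (hx : x ≠ 0) (c : F) : χ (x ^ 2 * c) = χ c := by
  rw [map_mul, quadraticChar_sq_one' hx, one_mul]

lemma abs_quadraticChar_le_one (a : F) : |χ a| ≤ 1 := by
  rcases quadraticChar_isQuadratic F a with h | h | h <;> simp [h]

lemma quadraticChar_sum_sq : ∑ z : F, χ (z ^ 2) = Fintype.card F - 1 := by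
  rw [← sum_erase_add _ _ (mem_univ 0),
    sum_congr rfl fun z hz => quadraticChar_sq_one' (ne_of_mem_erase hz)]
  simp [card_erase_of_mem, Nat.cast_sub Fintype.card_pos]

lemma quadraticChar_sum_add_mul_add (hF : ringChar F ≠ 2) (a b : F) :
    ∑ z : F, χ ((z + a) * (z + b)) = if a = b then (Fintype.card F : ℤ) - 1 else -1 := by
  split_ifs with hab
  · subst hab
    rw [← quadraticChar_sum_sq]
    exact Fintype.sum_equiv (Equiv.addRight a) _ _ fun z => by simp [sq]
  · have hc : a - b ≠ 0 := sub_ne_zero.mpr hab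
    have hJ : jacobiSum χ χ = -χ (-1) := by
      rw [← jacobiSum_nontrivial_inv (quadraticChar_ne_one hF), (quadraticChar_isQuadratic F).inv]
    calc ∑ z : F, χ ((z + a) * (z + b))
        = ∑ x : F, χ (-1) * (χ x * χ (1 - x)) := by
          refine (Fintype.sum_equiv ((Equiv.mulLeft₀ _ hc).trans (Equiv.subRight a)) _ _
            fun x => ?_).symm
          simp only [Equiv.trans_apply, Equiv.mulLeft₀_apply, Equiv.subRight_apply]
          rw [← map_mul, ← map_mul, ← quadraticChar_sq_mul hc]
          ring_nf
      _ = -1 := by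
          rw [← mul_sum, ← jacobiSum, hJ, mul_neg, ← sq,
            quadraticChar_sq_one (neg_ne_zero.mpr one_ne_zero)]

lemma sum_ite_eq_zero_zero_const (c : ℤ) :
    ∑ x : F, (if x = 0 then 0 else c) = ((Fintype.card F : ℤ) - 1) * c := by
  simp [sum_ite, filter_ne', card_erase_of_mem, Nat.cast_sub Fintype.card_pos]

lemma sum_filter_sq_eq_sq_quadraticChar_mul (hF : ringChar F ≠ 2) {x : F} (hx : x ≠ 0) :
    ∑ y ∈ univ.filter (fun y : F => y ^ 2 = x ^ 2), χ (x * y) = 1 + χ (-1) := by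
  have hxx : x ≠ -x := fun h => hx ((Ring.eq_self_iff_eq_zero_of_char_ne_two hF).mp h.symm)
  have hroots : univ.filter (fun y : F => y ^ 2 = x ^ 2) = {x, -x} := by
    ext y
    simp only [mem_filter, mem_univ, true_and, mem_insert, mem_singleton,
      sq_eq_sq_iff_eq_or_eq_neg]
  rw [hroots, sum_pair hxx, show x * x = x ^ 2 * 1 by ring, show x * -x = x ^ 2 * (-1) by ring,
    quadraticChar_sq_mul hx, quadraticChar_sq_mul hx, map_one]

lemma sum_comp_sq (hF : ringChar F ≠ 2) (f : F → ℤ) :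
    ∑ d : F, f (d ^ 2) = ∑ s : F, (χ s + 1) * f s := by
  rw [← sum_fiberwise' univ (· ^ 2) f]
  refine sum_congr rfl fun s _ => ?_
  rw [sum_const, nsmul_eq_mul, ← quadraticChar_card_sqrts hF s, Set.toFinset_ofPred]

lemma card_filter_sq_add_mul_add_eq_zero (hF : ringChar F ≠ 2) (β γ : F) :
    (#{x : F | x ^ 2 + β * x + γ = 0} : ℤ) = χ (β ^ 2 - 4 * γ) + 1 := by
  have h2 : (2 : F) ≠ 0 := Ring.two_ne_zero hF
  rw [← quadraticChar_card_sqrts hF, Set.toFinset_ofPred]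
  norm_cast
  refine card_equiv ((Equiv.mulLeft₀ 2 h2).trans (Equiv.addRight β)) fun x => ?_
  simp only [mem_filter_univ, Equiv.trans_apply, Equiv.mulLeft₀_apply, Equiv.coe_addRight]
  constructor <;> intro h
  · linear_combination 4 * h
  · have h4 : (4 : F) ≠ 0 := by simpa [show (4 : F) = 2 ^ 2 by norm_num] using h2
    have h' : (4 : F) * (x ^ 2 + β * x + γ) = 0 := by linear_combination h
    exact (mul_eq_zero.mp h').resolve_left h4

lemma sum_erase_zero_comp_add_div (hF : ringChar F ≠ 2) {b : F} (hb : b ≠ 0) (f : F → ℤ) :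
    ∑ m ∈ univ.erase 0, f (m + b / m) = ∑ z : F, (χ (z ^ 2 - 4 * b) + 1) * f z := by
  rw [← sum_fiberwise' (univ.erase 0) (fun m => m + b / m) f]
  refine sum_congr rfl fun z _ => ?_
  have hfiber : (univ.erase 0).filter (fun m => m + b / m = z) =
      univ.filter (fun m : F => m ^ 2 + -z * m + b = 0) := by
    ext m
    simp only [mem_filter, mem_erase, mem_univ, and_true, true_and]
    constructor
    · rintro ⟨hm, rfl⟩
      field_simp
      ring
    · intro h
      have hm : m ≠ 0 := by rintro rfl; exact hb (by simpa using h)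
      refine ⟨hm, ?_⟩
      field_simp
      linear_combination h
  rw [sum_const, nsmul_eq_mul, hfiber, card_filter_sq_add_mul_add_eq_zero hF, neg_sq]

/-- The 2-isogeny `y² = x(x² + a x + b) → y² = (x + a)(x² - 4b)` preserves the point count. -/
lemma quadraticChar_sum_two_isogeny (hF : ringChar F ≠ 2) (a : F) {b : F} (hb : b ≠ 0) :
    ∑ m : F, χ (m * (m ^ 2 + a * m + b)) = ∑ z : F, χ ((z + a) * (z ^ 2 - 4 * b)) := by
  have hshift : ∑ z : F, χ (z + a) = 0 :=
    (Fintype.sum_equiv (Equiv.addRight a) _ _ fun _ => rfl).trans (quadraticChar_sum_zero hF)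
  calc ∑ m : F, χ (m * (m ^ 2 + a * m + b))
      = ∑ m ∈ univ.erase 0, χ (m + b / m + a) := by
        rw [← sum_erase_add univ _ (mem_univ 0), zero_mul, quadraticChar_zero, add_zero]
        refine sum_congr rfl fun m hm => ?_
        rw [← quadraticChar_sq_mul (ne_of_mem_erase hm) (m + b / m + a)]
        congr 1
        field_simp [ne_of_mem_erase hm]
        ring
    _ = ∑ z : F, (χ (z ^ 2 - 4 * b) + 1) * χ (z + a) :=
        sum_erase_zero_comp_add_div hF hb fun z => χ (z + a)
    _ = ∑ z : F, (χ ((z + a) * (z ^ 2 - 4 * b)) + χ (z + a)) :=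
        sum_congr rfl fun z _ => by rw [map_mul]; ring
    _ = ∑ z : F, χ ((z + a) * (z ^ 2 - 4 * b)) := by rw [sum_add_distrib, hshift, add_zero]

lemma sum_erase_neg_one_comp_cayley {M : Type*} [AddCommMonoid M] (hF : ringChar F ≠ 2)
    (f : F → M) :
    ∑ w ∈ univ.erase (-1), f ((1 - w) / (1 + w)) = ∑ w ∈ univ.erase (-1), f w := by
  have h2 : (2 : F) ≠ 0 := Ring.two_ne_zero hF
  have h1w : ∀ w ∈ univ.erase (-1 : F), 1 + w ≠ 0 := fun w hw h =>
    ne_of_mem_erase hw (eq_neg_of_add_eq_zero_right h)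
  have hmaps : ∀ w ∈ univ.erase (-1 : F), (1 - w) / (1 + w) ∈ univ.erase (-1) := by
    intro w hw
    refine mem_erase.mpr ⟨fun h => h2 ?_, mem_univ _⟩
    rw [div_eq_iff (h1w w hw)] at h
    linear_combination h
  have hinv : ∀ w ∈ univ.erase (-1 : F), (1 - (1 - w) / (1 + w)) / (1 + (1 - w) / (1 + w)) = w := by
    intro w hw
    have := h1w w hw
    field_simp
    rw [show 1 + w - (1 - w) = 2 * w by ring, show 1 + w + (1 - w) = 2 by ring,
      mul_div_cancel_left₀ w h2]
  exact sum_nbij' _ _ hmaps hmaps hinv hinv fun _ _ => rfl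

def legendreSum (t : F) : ℤ := ∑ u : F, χ (u * (u + 1) * (u + t))

lemma legendreSum_one (hF : ringChar F ≠ 2) : legendreSum (1 : F) = -χ (-1) := by
  have h : ∀ u : F, χ (u * (u + 1) * (u + 1)) = χ u - if u = -1 then χ u else 0 := by
    intro u
    split_ifs with hu
    · subst hu; simp
    · have hu1 : u + 1 ≠ 0 := fun h => hu (eq_neg_of_add_eq_zero_left h)
      rw [sub_zero, ← quadraticChar_sq_mul hu1 u]
      ring_nf
  simp only [legendreSum, h, sum_sub_distrib, quadraticChar_sum_zero hF, sum_ite_eq', mem_univ,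
    if_true, zero_sub]

/-- Landen's transformation: the 2-isogeny between the Legendre curves with parameters `w²` and
`((1 - w) / (1 + w))²`. -/
lemma legendreSum_sq_eq (hF : ringChar F ≠ 2) {w : F} (hw0 : w ≠ 0) (hw1 : w ≠ -1) :
    legendreSum (w ^ 2) = χ (-1) * legendreSum (((1 - w) / (1 + w)) ^ 2) := by
  have h1w : 1 + w ≠ 0 := fun h => hw1 (eq_neg_of_add_eq_zero_right h)
  calc legendreSum (w ^ 2)
      = ∑ m : F, χ (m * (m ^ 2 + (1 + w ^ 2) * m + w ^ 2)) :=
        sum_congr rfl fun m _ => by ring_nf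
    _ = ∑ z : F, χ ((z + (1 + w ^ 2)) * (z ^ 2 - 4 * w ^ 2)) :=
        quadraticChar_sum_two_isogeny hF _ (pow_ne_zero 2 hw0)
    _ = ∑ u : F, χ (-1) * χ (u * (u + 1) * (u + ((1 - w) / (1 + w)) ^ 2)) := by
        refine (Fintype.sum_equiv ((Equiv.mulLeft₀ _ (neg_ne_zero.mpr (pow_ne_zero 2 h1w))).trans
          (Equiv.addRight (-(1 + w ^ 2)))) _ _ fun u => ?_).symm
        simp only [Equiv.trans_apply, Equiv.mulLeft₀_apply, Equiv.coe_addRight]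
        rw [← map_mul, ← quadraticChar_sq_mul (pow_ne_zero 3 h1w)]
        congr 1
        field_simp
        ring
    _ = χ (-1) * legendreSum (((1 - w) / (1 + w)) ^ 2) := (mul_sum ..).symm

lemma quadraticChar_mul_legendreSum_sq_eq (hF : ringChar F ≠ 2) {w : F} (hw : w ≠ -1) :
    χ w * legendreSum (w ^ 2) =
      χ (((1 - w) / (1 + w)) ^ 2 - 1) * legendreSum (((1 - w) / (1 + w)) ^ 2) := by
  rcases eq_or_ne w 0 with rfl | hw0
  · simp
  have h1w : 1 + w ≠ 0 := fun h => hw (eq_neg_of_add_eq_zero_right h)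
  have hchi : χ (((1 - w) / (1 + w)) ^ 2 - 1) = χ (-1) * χ w := by
    rw [← map_mul, ← quadraticChar_sq_mul (div_ne_zero (Ring.two_ne_zero hF) h1w) (-1 * w)]
    congr 1
    field_simp
    ring
  rw [legendreSum_sq_eq hF hw0 hw, hchi]
  ring

lemma sum_quadraticChar_sub_one_mul_legendreSum (hF : ringChar F ≠ 2) :
    ∑ s : F, χ (s - 1) * legendreSum s = 1 := by
  have hinner : ∀ u : F,
      χ (u * (u + 1)) * ∑ s : F, χ ((s + -1) * (s + u)) = -χ ((u + 0) * (u + 1)) := by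
    intro u
    rw [quadraticChar_sum_add_mul_add hF]
    split_ifs with hu
    · subst hu; simp
    · simp
  calc ∑ s : F, χ (s - 1) * legendreSum s
      = ∑ u : F, χ (u * (u + 1)) * ∑ s : F, χ ((s + -1) * (s + u)) := by
        simp only [legendreSum, mul_sum]
        rw [sum_comm]
        refine sum_congr rfl fun u _ => sum_congr rfl fun s _ => ?_
        rw [← map_mul, ← map_mul]
        ring_nf
    _ = 1 := by
        rw [sum_congr rfl fun u _ => hinner u, sum_neg_distrib, quadraticChar_sum_add_mul_add hF,
          if_neg zero_ne_one, neg_neg]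

lemma sum_quadraticChar_mul_legendreSum_sq (hF : ringChar F ≠ 2) :
    ∑ w : F, χ w * legendreSum (w ^ 2) = ∑ t : F, χ (t * (t - 1)) * legendreSum t := by
  have hneg : χ (-1 : F) * χ (-1) = 1 := by
    rw [← sq, quadraticChar_sq_one (neg_ne_zero.mpr one_ne_zero)]
  calc ∑ w : F, χ w * legendreSum (w ^ 2)
      = ∑ w ∈ univ.erase (-1), χ w * legendreSum (w ^ 2) + χ (-1) * legendreSum ((-1) ^ 2) :=
        (sum_erase_add _ _ (mem_univ _)).symm
    _ = ∑ d ∈ univ.erase (-1), χ (d ^ 2 - 1) * legendreSum (d ^ 2) - 1 := by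
        rw [sum_congr rfl fun w hw => quadraticChar_mul_legendreSum_sq_eq hF (ne_of_mem_erase hw),
          sum_erase_neg_one_comp_cayley hF fun d => χ (d ^ 2 - 1) * legendreSum (d ^ 2),
          neg_one_sq, legendreSum_one hF, mul_neg, hneg, sub_eq_add_neg]
    _ = ∑ d : F, χ (d ^ 2 - 1) * legendreSum (d ^ 2) - 1 := by
        rw [← sum_erase_add univ _ (mem_univ (-1))]
        simp
    _ = ∑ s : F, (χ s + 1) * (χ (s - 1) * legendreSum s) - 1 := by
        rw [sum_comp_sq hF fun s => χ (s - 1) * legendreSum s]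
    _ = ∑ t : F, χ (t * (t - 1)) * legendreSum t := by
        simp only [add_mul, one_mul, sum_add_distrib, sum_quadraticChar_sub_one_mul_legendreSum hF,
          map_mul, mul_assoc, add_sub_cancel_right]

lemma sum_quadraticChar_eq_sum_legendreSum :
    ∑ u : F, ∑ v : F, χ (u * v * (u + 1) * (v + 1) * (u * v - 1)) =
      ∑ t : F, χ (t * (t - 1)) * legendreSum t := by
  have hrow : ∀ u : F, ∑ v : F, χ (u * v * (u + 1) * (v + 1) * (u * v - 1)) =
      ∑ t : F, χ (t * (t - 1)) * χ (u * (u + 1) * (u + t)) := by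
    intro u
    rcases eq_or_ne u 0 with rfl | hu
    · simp
    refine Fintype.sum_equiv (Equiv.mulLeft₀ u hu) _ _ fun v => ?_
    rw [Equiv.mulLeft₀_apply, ← map_mul,
      ← quadraticChar_sq_mul hu (u * v * (u + 1) * (v + 1) * (u * v - 1))]
    ring_nf
  simp only [hrow, legendreSum, mul_sum]
  exact sum_comm

def jacobsthalSum (n : F) : ℤ := ∑ x : F, χ (x * (x ^ 2 + n))

lemma sum_quadraticChar_mul_jacobsthalSum_sq :
    ∑ n : F, χ n * jacobsthalSum n ^ 2 =
      ((Fintype.card F : ℤ) - 1) * ∑ w : F, χ w * legendreSum (w ^ 2) := by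
  have hslice : ∀ x : F, ∑ n : F, ∑ y : F, χ (n * (x * (x ^ 2 + n)) * (y * (y ^ 2 + n))) =
      if x = 0 then 0 else ∑ w : F, χ w * legendreSum (w ^ 2) := by
    intro x
    split_ifs with hx
    · simp [hx]
    calc ∑ n : F, ∑ y : F, χ (n * (x * (x ^ 2 + n)) * (y * (y ^ 2 + n)))
        = ∑ m : F, ∑ w : F,
            χ (x ^ 2 * m * (x * (x ^ 2 + x ^ 2 * m)) * (x * w * ((x * w) ^ 2 + x ^ 2 * m))) := by
          rw [← Equiv.sum_comp (Equiv.mulLeft₀ _ (pow_ne_zero 2 hx))]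
          exact sum_congr rfl fun m _ => (Equiv.sum_comp (Equiv.mulLeft₀ _ hx) _).symm
      _ = ∑ m : F, ∑ w : F, χ w * χ (m * (m + 1) * (m + w ^ 2)) := by
          refine sum_congr rfl fun m _ => sum_congr rfl fun w _ => ?_
          rw [← map_mul,
            ← quadraticChar_sq_mul (pow_ne_zero 4 hx) (w * (m * (m + 1) * (m + w ^ 2)))]
          ring_nf
      _ = ∑ w : F, χ w * legendreSum (w ^ 2) := by
          simp only [legendreSum, mul_sum]
          exact sum_comm
  calc ∑ n : F, χ n * jacobsthalSum n ^ 2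
      = ∑ n : F, ∑ x : F, ∑ y : F, χ (n * (x * (x ^ 2 + n)) * (y * (y ^ 2 + n))) := by
        refine sum_congr rfl fun n _ => ?_
        rw [jacobsthalSum, sq, sum_mul_sum, mul_sum]
        simp_rw [mul_sum, ← map_mul, mul_assoc]
    _ = ∑ x : F, ∑ n : F, ∑ y : F, χ (n * (x * (x ^ 2 + n)) * (y * (y ^ 2 + n))) := sum_comm
    _ = ((Fintype.card F : ℤ) - 1) * ∑ w : F, χ w * legendreSum (w ^ 2) := by
        rw [sum_congr rfl fun x _ => hslice x, sum_ite_eq_zero_zero_const]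

lemma sum_jacobsthalSum_sq (hF : ringChar F ≠ 2) :
    ∑ n : F, jacobsthalSum n ^ 2 =
      (Fintype.card F : ℤ) * ((Fintype.card F : ℤ) - 1) * (1 + χ (-1)) := by
  have hdiag : ∀ x : F, ∑ y : F, (if y ^ 2 = x ^ 2 then χ (x * y) else 0) =
      if x = 0 then 0 else 1 + χ (-1) := by
    intro x
    split_ifs with hx
    · simp [hx]
    · rw [← sum_filter, sum_filter_sq_eq_sq_quadraticChar_mul hF hx]
  calc ∑ n : F, jacobsthalSum n ^ 2
      = ∑ n : F, ∑ x : F, ∑ y : F, χ (x * (x ^ 2 + n)) * χ (y * (y ^ 2 + n)) := by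
        simp only [jacobsthalSum, sq, sum_mul_sum]
    _ = ∑ x : F, ∑ y : F, ∑ n : F, χ (x * y) * χ ((n + x ^ 2) * (n + y ^ 2)) := by
        rw [sum_comm]
        refine sum_congr rfl fun x _ => ?_
        rw [sum_comm]
        refine sum_congr rfl fun y _ => sum_congr rfl fun n _ => ?_
        simp only [← map_mul]
        ring_nf
    _ = ∑ x : F, ∑ y : F, χ (x * y) * ∑ n : F, χ ((n + x ^ 2) * (n + y ^ 2)) := by
        simp_rw [mul_sum]
    _ = ∑ x : F, ∑ y : F, ((Fintype.card F : ℤ) * (if y ^ 2 = x ^ 2 then χ (x * y) else 0) -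
          χ x * χ y) := by
        refine sum_congr rfl fun x _ => sum_congr rfl fun y _ => ?_
        rw [quadraticChar_sum_add_mul_add hF, map_mul]
        by_cases h : y ^ 2 = x ^ 2
        · rw [if_pos h.symm, if_pos h]; ring
        · rw [if_neg (Ne.symm h), if_neg h]; ring
    _ = (Fintype.card F : ℤ) * ((Fintype.card F : ℤ) - 1) * (1 + χ (-1)) := by
        simp only [sum_sub_distrib, ← mul_sum, hdiag, sum_ite_eq_zero_zero_const,
          quadraticChar_sum_zero hF, mul_zero, sub_zero]
        ring

theorem abs_sum_quadraticChar_le (hF : ringChar F ≠ 2) :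
    |∑ u : F, ∑ v : F, χ (u * v * (u + 1) * (v + 1) * (u * v - 1))| ≤ 2 * (Fintype.card F : ℤ) := by
  have hq : (1 : ℤ) < Fintype.card F := by exact_mod_cast Fintype.one_lt_card
  have hmoment : ((Fintype.card F : ℤ) - 1) *
      ∑ u : F, ∑ v : F, χ (u * v * (u + 1) * (v + 1) * (u * v - 1)) =
        ∑ n : F, χ n * jacobsthalSum n ^ 2 := by
    rw [sum_quadraticChar_mul_jacobsthalSum_sq, sum_quadraticChar_mul_legendreSum_sq hF,
      sum_quadraticChar_eq_sum_legendreSum]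
  have hmoment_le : |∑ n : F, χ n * jacobsthalSum n ^ 2| ≤ ∑ n : F, jacobsthalSum n ^ 2 := by
    refine (abs_sum_le_sum_abs _ _).trans (sum_le_sum fun n _ => ?_)
    rw [abs_mul, abs_sq]
    exact mul_le_of_le_one_left (sq_nonneg _) (abs_quadraticChar_le_one n)
  have hneg : χ (-1 : F) ≤ 1 := le_of_abs_le (abs_quadraticChar_le_one _)
  rw [sum_jacobsthalSum_sq hF, ← hmoment, abs_mul, abs_of_pos (sub_pos.mpr hq)] at hmoment_le
  refine le_of_mul_le_mul_left (hmoment_le.trans ?_) (sub_pos.mpr hq)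
  have hq0 : (0 : ℤ) ≤ Fintype.card F * (Fintype.card F - 1) := by positivity
  linarith [mul_le_mul_of_nonneg_left hneg hq0]

end

/-- Lemma 14.1: for `p` an odd prime,
`|Σ_{u,v mod p} χ(u v (u+1)(v+1)(u v − 1))| ≤ 4p`. -/
theorem g_chi_chi_bound (p : ℕ) (hp : p.Prime) (hodd : Odd p) :
    ‖∑ u ∈ Finset.range p, ∑ v ∈ Finset.range p,
        (jacobiSym ((u : ℤ) * v * ((u : ℤ) + 1) * ((v : ℤ) + 1) * ((u : ℤ) * v - 1)) p : ℂ)‖ ≤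
      4 * p := by
  have : Fact p.Prime := ⟨hp⟩
  have hF : ringChar (ZMod p) ≠ 2 := by
    rw [ZMod.ringChar_zmod_n]
    rintro rfl
    norm_num at hodd
  have hsum : ∑ u ∈ range p, ∑ v ∈ range p,
      (jacobiSym ((u : ℤ) * v * ((u : ℤ) + 1) * ((v : ℤ) + 1) * ((u : ℤ) * v - 1)) p : ℂ) =
      ((∑ u : ZMod p, ∑ v : ZMod p,
        quadraticChar (ZMod p) (u * v * (u + 1) * (v + 1) * (u * v - 1)) : ℤ) : ℂ) := by
    simp_rw [← jacobiSym.legendreSym.to_jacobiSym, legendreSym]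
    push_cast
    let g (u v : ZMod p) : ℂ := quadraticChar (ZMod p) (u * v * (u + 1) * (v + 1) * (u * v - 1))
    exact (ZMod.sum_range_natCast p fun u => ∑ v ∈ range p, g u v).trans
      (sum_congr rfl fun u _ => ZMod.sum_range_natCast p (g u))
  have hbound := abs_sum_quadraticChar_le hF
  rw [ZMod.card] at hbound
  rw [hsum, Complex.norm_intCast]
  exact_mod_cast hbound.trans (by omega)
end
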